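/- arXiv:math/0201101 — 7 statements merged into one kernel-verified Lean document; each statement's English description precedes it below -/
import Mathlib

section
/- A locally compact Hausdorff topological group G is approximable by finite semigroups if and only if it is approximable by finite groups. Here, for a class K of finite algebras, G is approximable by algebras of K if for every compact set C ⊆ G and every neighborhood U of the identity there exist H ∈ K and an injective map j : H → G such that C ⊆ j(H)U and for all x,y ∈ H with j(x), j(y), j(x)·j(y) ∈ C one has j(x⊙y) ∈ j(x)j(y)U, where ⊙ is the operation of H. -/
/-!
Let a finite semigroup `H` approximate `G` through `j` on `Q⁹`, where `Q ⊇ C` is a compact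
symmetric neighbourhood of `1` and the error set `V` is small. Among the elements whose value
lies in `Q⁸`, pick `z` maximal for right divisibility with `j z` close to `1`. Then `z * z` divides
`z`, which yields an idempotent `e` with `e z = z = z e` and `e ∈ z H`. For `c ∈ Q`, the element
`x = z s z` with `j s ≈ (j z)⁻¹ c (j z)⁻¹` has `j x ≈ c`, and by maximality `x` divides `z`; so `x`
has a right inverse, hence is a unit, in the finite monoid `e H e`. The unit group of `e H e`
is the approximating finite group.
-/

open Pointwise Topology

section Corner

variable {S : Type*} [Semigroup S] {e : S}

instance (he : IsIdempotentElem e) : Monoid he.Corner where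
  __ : Semigroup he.Corner := inferInstanceAs (Semigroup (Subsemigroup.corner e))
  one := ⟨e, e, by simp_rw [he.eq]⟩
  one_mul x := Subtype.ext ((Subsemigroup.mem_corner_iff he).mp x.2).1
  mul_one x := Subtype.ext ((Subsemigroup.mem_corner_iff he).mp x.2).2

instance [Finite S] (he : IsIdempotentElem e) : Finite he.Corner :=
  inferInstanceAs (Finite (Subsemigroup.corner e))

lemma IsIdempotentElem.isUnit_corner_of_mul_eq [Finite S] {he : IsIdempotentElem e}
    (x : he.Corner) {y : S} (hxy : x.1 * y = e) : IsUnit x := by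
  have hx : x * ⟨e * y * e, y, rfl⟩ = 1 := Subtype.ext <| show x.1 * (e * y * e) = e by
    rw [← mul_assoc, ← mul_assoc, ((Subsemigroup.mem_corner_iff he).mp x.2).2, hxy, he.eq]
  exact ⟨⟨x, _, hx, mul_eq_one_symm hx⟩, rfl⟩

end Corner

section FiniteSemigroup

variable {S : Type*} [Semigroup S] [Finite S]

lemma exists_dvd_maximal {P : Set S} (hP : P.Nonempty) :
    ∃ z ∈ P, ∀ y ∈ P, z ∣ y → y ∣ z := by
  let : Preorder S :=
    { le := fun x y => x = y ∨ x ∣ y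
      le_refl := fun _ => Or.inl rfl
      le_trans := by
        rintro x y w (rfl | hxy) (rfl | hyw)
        exacts [Or.inl rfl, Or.inr hyw, Or.inr hxy, Or.inr (dvd_trans hxy hyw)] }
  obtain ⟨z, -, hz⟩ := (Set.toFinite P).exists_le_maximal hP.some_mem
  refine ⟨z, hz.prop, fun y hy hzy => ?_⟩
  obtain rfl | hyz := hz.2 hy (Or.inr hzy)
  exacts [hzy, hyz]

lemma exists_isIdempotentElem_of_mul_self_dvd {z : S} (hz : z * z ∣ z) :
    ∃ e, IsIdempotentElem e ∧ e * z = z ∧ z * e = z ∧ z ∣ e := by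
  -- Ellis–Numakura lemma, for the discrete topology, in the subsemigroup `T ∋ z`.
  let T : Set S := {y | y * z = z * y ∧ y * z ∣ z ∧ z ∣ y}
  let : TopologicalSpace S := ⊥
  have : DiscreteTopology S := ⟨rfl⟩
  obtain ⟨e, ⟨hcomm, ⟨w, hw⟩, hze⟩, he⟩ := exists_idempotent_in_compact_subsemigroup
    (fun _ => continuous_of_discreteTopology) T ⟨z, rfl, hz, dvd_trans (dvd_mul_right z z) hz⟩
    (Set.toFinite T).isCompact (by
      rintro y₁ ⟨hc₁, hd₁, hz₁⟩ y₂ ⟨hc₂, hd₂, -⟩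
      refine ⟨by rw [mul_assoc, hc₂, ← mul_assoc, hc₁, mul_assoc], ?_, hz₁.mul_right y₂⟩
      calc y₁ * y₂ * z = y₁ * (y₂ * z) := mul_assoc _ _ _
        _ ∣ y₁ * z := mul_dvd_mul_left y₁ hd₂
        _ ∣ z := hd₁)
  have hez : e * z = z :=
    calc e * z = e * (e * z * w) := by rw [← hw]
      _ = e * z * w := by simp only [← mul_assoc, he]
      _ = z := hw.symm
  exact ⟨e, he, hez, hcomm ▸ hez, hze⟩

end FiniteSemigroup

lemma IsCompact.pow {M : Type*} [TopologicalSpace M] [Monoid M] [ContinuousMul M] {s : Set M}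
    (hs : IsCompact s) : ∀ n : ℕ, IsCompact (s ^ n)
  | 0 => by rw [pow_zero]; exact isCompact_singleton
  | n + 1 => by rw [pow_succ]; exact (hs.pow n).mul hs

lemma Set.mul_mem_pow_add {M : Type*} [Monoid M] {s : Set M} {x y : M} {m n : ℕ}
    (hx : x ∈ s ^ m) (hy : y ∈ s ^ n) : x * y ∈ s ^ (m + n) :=
  pow_add s m n ▸ Set.mul_mem_mul hx hy

lemma Set.inv_mem_pow {α : Type*} [DivisionMonoid α] {s : Set α} (hs : s⁻¹ = s) {x : α} {n : ℕ}
    (hx : x ∈ s ^ n) : x⁻¹ ∈ s ^ n := by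
  rw [← hs, inv_pow]
  exact Set.inv_mem_inv.2 hx

lemma exists_mem_nhds_one_pow_subset {M : Type*} [TopologicalSpace M] [Monoid M] [ContinuousMul M]
    {U : Set M} (hU : U ∈ 𝓝 1) (n : ℕ) : ∃ V ∈ 𝓝 (1 : M), V ^ n ⊆ U := by
  induction n generalizing U with
  | zero => exact ⟨Set.univ, Filter.univ_mem, by simpa using mem_of_mem_nhds hU⟩
  | succ n ih =>
    obtain ⟨W, hW, hWU⟩ := exists_nhds_one_split hU
    obtain ⟨V, hV, hVW⟩ := ih hW
    refine ⟨V ∩ W, Filter.inter_mem hV hW, ?_⟩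
    rw [pow_succ]
    rintro _ ⟨a, ha, b, hb, rfl⟩
    exact hWU a (hVW (Set.pow_subset_pow_left Set.inter_subset_left ha)) b hb.2

section Approximation

variable {G H : Type*} [Group G] [Semigroup H]

structure IsApprox (j : H → G) (D V : Set G) : Prop where
  subset_range_mul : D ⊆ Set.range j * V
  map_mul_mem : ∀ x y, j x ∈ D → j y ∈ D → j x * j y ∈ D → j (x * y) ∈ (j x * j y) • V

variable {j : H → G} {D Q V : Set G}

lemma IsApprox.exists_map_mul_eq (hj : IsApprox j D V) {x y : H} (hx : j x ∈ D) (hy : j y ∈ D)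
    (hxy : j x * j y ∈ D) : ∃ v ∈ V, j (x * y) = j x * j y * v := by
  obtain ⟨v, hv, h⟩ := Set.mem_smul_set.1 (hj.map_mul_mem x y hx hy hxy)
  exact ⟨v, hv, h.symm⟩

lemma IsApprox.exists_map_eq_mul (hj : IsApprox j D V) (hV : V⁻¹ = V) {τ : G} (hτ : τ ∈ D) :
    ∃ x, ∃ v ∈ V, j x = τ * v := by
  obtain ⟨_, ⟨x, rfl⟩, v, hv, h⟩ := hj.subset_range_mul hτ
  exact ⟨x, v⁻¹, hV ▸ Set.inv_mem_inv.2 hv, by rw [← h, mul_inv_cancel_right]⟩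

lemma IsApprox.exists_dvd_maximal_near_one [Finite H] (hj : IsApprox j (Q ^ 9) V)
    (hQ : Q⁻¹ = Q) (hQ1 : 1 ∈ Q) (hV : V⁻¹ = V) (hVQ : V ⊆ Q) :
    ∃ z, j z ∈ V ^ 2 ∧ ∀ y, j y ∈ Q ^ 8 → z ∣ y → y ∣ z := by
  have hVQ8 : V ⊆ Q ^ 8 := hVQ.trans (Set.subset_pow hQ1 (by norm_num))
  obtain ⟨u, v, hv, hu⟩ := hj.exists_map_eq_mul hV (Set.one_mem_pow hQ1)
  obtain ⟨z₀, hz₀, hmax⟩ := exists_dvd_maximal (P := {x | j x ∈ Q ^ 8})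
    ⟨u, hVQ8 (by rwa [hu, one_mul])⟩
  -- Moving `z₀` by `q` with `j q ≈ (j z₀)⁻¹` keeps it maximal and brings it near `1`;
  -- `j q ∈ Q⁹` is why the approximation is needed on `Q⁹`.
  have hz₀' : (j z₀)⁻¹ ∈ Q ^ 8 := Set.inv_mem_pow hQ hz₀
  obtain ⟨q, a, ha, hq⟩ := hj.exists_map_eq_mul hV (Set.pow_subset_pow_right hQ1 (by norm_num) hz₀')
  have hz₀q : j z₀ * j q = a := by rw [hq, mul_inv_cancel_left]
  obtain ⟨b, hb, hz⟩ := hj.exists_map_mul_eq (Set.pow_subset_pow_right hQ1 (by norm_num) hz₀)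
    (hq ▸ Set.mul_mem_pow_add hz₀' (by rw [pow_one]; exact hVQ ha))
    (hz₀q ▸ Set.subset_pow hQ1 (by norm_num) (hVQ ha))
  refine ⟨z₀ * q, ?_, fun y hy hzy => ?_⟩
  · rw [hz, hz₀q, sq]
    exact Set.mul_mem_mul ha hb
  · exact dvd_trans (hmax y hy (dvd_trans (dvd_mul_right z₀ q) hzy)) (dvd_mul_right z₀ q)

lemma IsApprox.exists_isIdempotentElem [Finite H] (hj : IsApprox j (Q ^ 9) V) (hQ1 : 1 ∈ Q)
    (hVQ : V ⊆ Q) {z : H} (hz : j z ∈ V ^ 2) (hmax : ∀ y, j y ∈ Q ^ 8 → z ∣ y → y ∣ z) :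
    ∃ e, IsIdempotentElem e ∧ e * z = z ∧ z * e = z ∧ z ∣ e := by
  have hzQ : j z ∈ Q ^ 2 := Set.pow_subset_pow_left hVQ hz
  have hzzQ : j z * j z ∈ Q ^ 4 := Set.mul_mem_pow_add hzQ hzQ
  obtain ⟨v, hv, hzz⟩ := hj.exists_map_mul_eq (Set.pow_subset_pow_right hQ1 (by norm_num) hzQ)
    (Set.pow_subset_pow_right hQ1 (by norm_num) hzQ)
    (Set.pow_subset_pow_right hQ1 (by norm_num) hzzQ)
  refine exists_isIdempotentElem_of_mul_self_dvd (hmax _ ?_ (dvd_mul_right z z))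
  rw [hzz]
  exact Set.pow_subset_pow_right hQ1 (by norm_num)
    (Set.mul_mem_pow_add hzzQ (by rw [pow_one]; exact hVQ hv) : _ ∈ Q ^ 5)

lemma IsApprox.exists_mul_mul_near (hj : IsApprox j (Q ^ 9) V) (hQ1 : 1 ∈ Q)
    (hV : V⁻¹ = V) (hVQ : V ⊆ Q) {z : H} (hz : j z ∈ V ^ 2) {c : G} (hc : c ∈ Q) :
    ∃ s, j (z * s * z) ∈ Q ^ 8 ∧ (j (z * s * z))⁻¹ * c ∈ V ^ 7 := by
  have mono : ∀ {m n : ℕ}, m ≤ n → Q ^ m ⊆ Q ^ n := fun {_ _} => Set.pow_subset_pow_right hQ1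
  have hVQn : ∀ {n : ℕ}, V ^ n ⊆ Q ^ n := fun {_} => Set.pow_subset_pow_left hVQ
  have hcQ : c ∈ Q ^ 1 := by rwa [pow_one]
  have hVQ1 : ∀ {v}, v ∈ V → v ∈ Q ^ 1 := fun hv => by rw [pow_one]; exact hVQ hv
  have hV1 : ∀ {v}, v ∈ V → v ∈ V ^ 1 := fun hv => by rwa [pow_one]
  -- With `j s ≈ (j z)⁻¹ c (j z)⁻¹`, the error of `j (z s z)` against `c` is a product of seven
  -- elements of `V`, with no conjugation by `c` involved.
  set w := (j z)⁻¹ with hw_def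
  have hw : w ∈ V ^ 2 := Set.inv_mem_pow hV hz
  obtain ⟨s, a, ha, hs⟩ := hj.exists_map_eq_mul hV (τ := w * c * w)
    (mono (by norm_num) (Set.mul_mem_pow_add (Set.mul_mem_pow_add (hVQn hw) hcQ) (hVQn hw)))
  have hzs : j z * j s = c * (w * a) := by rw [hs, hw_def]; group
  have hwa : w * a ∈ V ^ 3 := Set.mul_mem_pow_add hw (hV1 ha)
  obtain ⟨b, hb, hjzs⟩ := hj.exists_map_mul_eq (mono (by norm_num) (hVQn hz))
    (hs ▸ mono (by norm_num) (Set.mul_mem_pow_add (Set.mul_mem_pow_add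
      (Set.mul_mem_pow_add (hVQn hw) hcQ) (hVQn hw)) (hVQ1 ha)))
    (hzs ▸ mono (by norm_num) (Set.mul_mem_pow_add hcQ (hVQn hwa)))
  rw [hzs, mul_assoc] at hjzs
  have hwab : w * a * b ∈ V ^ 4 := Set.mul_mem_pow_add hwa (hV1 hb)
  have hwabz : w * a * b * j z ∈ V ^ 6 := Set.mul_mem_pow_add hwab hz
  obtain ⟨d, hd, hjx⟩ := hj.exists_map_mul_eq
    (hjzs ▸ mono (by norm_num) (Set.mul_mem_pow_add hcQ (hVQn hwab)))
    (mono (by norm_num) (hVQn hz))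
    (by rw [hjzs, mul_assoc]; exact mono (by norm_num) (Set.mul_mem_pow_add hcQ (hVQn hwabz)))
  have hm : w * a * b * j z * d ∈ V ^ 7 := Set.mul_mem_pow_add hwabz (hV1 hd)
  have hjx' : j (z * s * z) = c * (w * a * b * j z * d) := by rw [hjx, hjzs, hw_def]; group
  refine ⟨s, hjx' ▸ mono (by norm_num) (Set.mul_mem_pow_add hcQ (hVQn hm)), ?_⟩
  rw [hjx', mul_inv_rev, inv_mul_cancel_right]
  exact Set.inv_mem_pow hV hm

theorem IsApprox.exists_corner_units_cover [Finite H] (hj : IsApprox j (Q ^ 9) V)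
    (hQ : Q⁻¹ = Q) (hQ1 : 1 ∈ Q) (hV : V⁻¹ = V) (hVQ : V ⊆ Q) :
    ∃ (e : H) (he : IsIdempotentElem e),
      Q ⊆ Set.range (fun γ : he.Cornerˣ => j γ.1.1) * V ^ 7 := by
  obtain ⟨z, hz, hmax⟩ := hj.exists_dvd_maximal_near_one hQ hQ1 hV hVQ
  obtain ⟨e, he, hez, hze, t, rfl⟩ := hj.exists_isIdempotentElem hQ1 hVQ hz hmax
  refine ⟨z * t, he, fun c hc => ?_⟩
  obtain ⟨s, hx, hcx⟩ := hj.exists_mul_mul_near hQ1 hV hVQ hz hc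
  obtain ⟨d, hd⟩ := hmax _ hx ((dvd_mul_right z s).mul_right z)
  have hx_mem : z * s * z ∈ Subsemigroup.corner (z * t) :=
    (Subsemigroup.mem_corner_iff he).2
      ⟨by simp only [← mul_assoc, hez], by simp only [mul_assoc, hze]⟩
  obtain ⟨γ, hγ⟩ := IsIdempotentElem.isUnit_corner_of_mul_eq (he := he) ⟨_, hx_mem⟩
    (y := d * t) (by rw [← mul_assoc, ← hd])
  exact Set.mem_mul.2
    ⟨_, ⟨γ, congrArg (fun x : he.Corner => j x.1) hγ⟩, _, hcx, mul_inv_cancel_left _ _⟩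

end Approximation

theorem exists_group_approx_of_semigroup_approx {G : Type*} [Group G] [TopologicalSpace G]
    [IsTopologicalGroup G] [LocallyCompactSpace G]
    (hS : ∀ D : Set G, IsCompact D → ∀ V ∈ 𝓝 (1 : G), ∃ (H : Type) (_ : Finite H)
      (_ : Semigroup H) (j : H → G), Function.Injective j ∧ IsApprox j D V)
    {C : Set G} (hC : IsCompact C) {U : Set G} (hU : U ∈ 𝓝 (1 : G)) :
    ∃ (H : Type) (_ : Fintype H) (_ : Group H) (j : H → G),
      Function.Injective j ∧ IsApprox j C U := by
  obtain ⟨K, hK, hK1⟩ := exists_compact_mem_nhds (1 : G)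
  obtain ⟨V₀, hV₀, hV₀U⟩ := exists_mem_nhds_one_pow_subset hU 7
  have hW : V₀ ∩ K ∈ 𝓝 (1 : G) := Filter.inter_mem hV₀ hK1
  set V := (V₀ ∩ K) ∩ (V₀ ∩ K)⁻¹
  have hV : V ∈ 𝓝 (1 : G) := Filter.inter_mem hW (inv_mem_nhds_one G hW)
  have hV_inv : V⁻¹ = V := by rw [Set.inter_inv, inv_inv, Set.inter_comm]
  have hVU : V ^ 7 ⊆ U := (Set.pow_subset_pow_left fun _ hv => hv.1.1).trans hV₀U
  set P := C ∪ K
  set Q := P ∪ P⁻¹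
  have hQ_inv : Q⁻¹ = Q := by rw [Set.union_inv, inv_inv, Set.union_comm]
  have hQ1 : (1 : G) ∈ Q := Or.inl (Or.inr (mem_of_mem_nhds hK1))
  have hCQ : C ⊆ Q ^ 9 := fun c hc => Set.subset_pow hQ1 (by norm_num) (Or.inl (Or.inl hc))
  obtain ⟨H, _, _, j, hj_inj, hj⟩ :=
    hS (Q ^ 9) (((hC.union hK).union (hC.union hK).inv).pow 9) V hV
  obtain ⟨e, he, hcover⟩ := hj.exists_corner_units_cover hQ_inv hQ1 hV_inv
    fun _ hv => Or.inl (Or.inr hv.1.2)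
  refine ⟨he.Cornerˣ, Fintype.ofFinite _, inferInstance, fun γ => j γ.1.1,
    hj_inj.comp (Subtype.val_injective.comp (Units.val_injective (α := he.Corner))),
    ⟨fun c hc => Set.mul_subset_mul_left hVU (hcover (Or.inl (Or.inl hc))),
      fun γ δ hγ hδ hγδ => Set.smul_set_mono ?_ (hj.map_mul_mem _ _ (hCQ hγ) (hCQ hδ) (hCQ hγδ))⟩⟩
  exact (Set.subset_pow (mem_of_mem_nhds hV) (by norm_num)).trans hVU

theorem stmt_3_general {G : Type*} [Group G] [TopologicalSpace G] [IsTopologicalGroup G]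
    [LocallyCompactSpace G] :
    (∀ (C : Set G), IsCompact C → ∀ U ∈ nhds (1 : G),
      ∃ (H : Type) (_ : Fintype H) (hop : H → H → H) (j : H → G),
        (∀ x y z : H, hop (hop x y) z = hop x (hop y z)) ∧
        Function.Injective j ∧
        C ⊆ Set.range j * U ∧
        ∀ x y : H, j x ∈ C → j y ∈ C → j x * j y ∈ C →
          j (hop x y) ∈ (j x * j y) • U)
    ↔
    (∀ (C : Set G), IsCompact C → ∀ U ∈ nhds (1 : G),
      ∃ (H : Type) (_ : Fintype H) (_ : Group H) (j : H → G),
        Function.Injective j ∧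
        C ⊆ Set.range j * U ∧
        ∀ x y : H, j x ∈ C → j y ∈ C → j x * j y ∈ C →
          j (x * y) ∈ (j x * j y) • U) := by
  constructor
  · intro hS C hC U hU
    obtain ⟨H, _, _, j, hj_inj, hj⟩ := exists_group_approx_of_semigroup_approx (fun D hD V hV => by
      obtain ⟨H, _, hop, j, hassoc, hj_inj, hcover, hmul⟩ := hS D hD V hV
      let : Semigroup H := { mul := hop, mul_assoc := hassoc }
      exact ⟨H, inferInstance, inferInstance, j, hj_inj, hcover, hmul⟩) hC hU
    exact ⟨H, inferInstance, inferInstance, j, hj_inj, hj.subset_range_mul, hj.map_mul_mem⟩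
  · intro hG C hC U hU
    obtain ⟨H, _, _, j, hj_inj, hcover, hmul⟩ := hG C hC U hU
    exact ⟨H, inferInstance, (· * ·), j, mul_assoc, hj_inj, hcover, hmul⟩

/-- A locally compact group is approximable by finite semigroups iff it is
approximable by finite groups. -/
theorem stmt_3 {G : Type*} [Group G] [TopologicalSpace G] [IsTopologicalGroup G]
    [LocallyCompactSpace G] [T2Space G] :
    (∀ (C : Set G), IsCompact C → ∀ U ∈ nhds (1 : G),
      ∃ (H : Type) (_ : Fintype H) (hop : H → H → H) (j : H → G),
        (∀ x y z : H, hop (hop x y) z = hop x (hop y z)) ∧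
        Function.Injective j ∧
        C ⊆ Set.range j * U ∧
        ∀ x y : H, j x ∈ C → j y ∈ C → j x * j y ∈ C →
          j (hop x y) ∈ (j x * j y) • U)
    ↔
    (∀ (C : Set G), IsCompact C → ∀ U ∈ nhds (1 : G),
      ∃ (H : Type) (_ : Fintype H) (_ : Group H) (j : H → G),
        Function.Injective j ∧
        C ⊆ Set.range j * U ∧
        ∀ x y : H, j x ∈ C → j y ∈ C → j x * j y ∈ C →
          j (x * y) ∈ (j x * j y) • U) :=
  stmt_3_general
end

section
/- Let (A,∘) be a locally compact Hausdorff topological quasigroup satisfying both cancellation laws: ∘ is continuous, for all a,b ∈ A each of the equations a∘x = b and y∘a = b has a unique solution, the two division maps sending (b,a) to these solutions are continuous, and there are maps b,b' : A → A with b(a)∘(a∘x) = x and (x∘a)∘b'(a) = x for all a,x ∈ A. If A is approximable by finite quasigroups, then there exists a linear functional I on the space C_c(A,ℝ) of compactly supported continuous real-valued functions on A such that: (i) I(f) ≥ 0 whenever f ≥ 0; (ii) I(f) > 0 for every f ≥ 0 that is strictly positive at some point; (iii) for every compact S ⊆ A there is a constant C_S such that |I(f)| ≤ C_S · sup|f|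 for every f ∈ C_c(A,ℝ) with support contained in S; and (iv) I(f) ≥ I(l_h f) and I(f) ≥ I(r_h f) for every non-negative f ∈ C_c(A,ℝ) and every h ∈ A, where l_h(f)(a) = f(h∘a) and r_h(f)(a) = f(a∘h). -/
open Filter Topology Set

/-- A bundled finite-quasigroup approximation of `(A, op)`. -/
structure QApx {A : Type*} [TopologicalSpace A] (op : A → A → A) where
  C : Set A
  hC : IsCompact C
  U : Set (Set A)
  hUfin : U.Finite
  hUopen : ∀ V ∈ U, IsOpen V
  hUcov : C ⊆ ⋃₀ U
  H : Type
  fin : Fintype H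
  hop : H → H → H
  hl : ∀ a, Function.Bijective (hop a)
  hr : ∀ a, Function.Bijective fun x => hop x a
  j : H → A
  hinj : Function.Injective j
  dense : ∀ V ∈ U, (C ∩ V).Nonempty → ∃ h, j h ∈ V
  hom : ∀ x y, j x ∈ C → j y ∈ C → op (j x) (j y) ∈ C →
      ∃ V ∈ U, j (hop x y) ∈ V ∧ op (j x) (j y) ∈ V

attribute [instance] QApx.fin

/-- If a locally compact Hausdorff topological quasigroup satisfying both
cancellation laws is approximable by finite quasigroups, then there is a
positive bounded nontrivial linear functional `I` on `C_c(A, ℝ)` with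
`I f ≥ I (l_h f)` and `I f ≥ I (r_h f)` for every non-negative `f` and
every `h`. -/
theorem stmt_5 {A : Type*} [TopologicalSpace A] [T2Space A] [LocallyCompactSpace A]
    (op : A → A → A) (hcont : Continuous fun p : A × A => op p.1 p.2)
    (hlq : ∀ a : A, Function.Bijective (op a))
    (hrq : ∀ a : A, Function.Bijective (fun x => op x a))
    (ld : A → A → A) (hld : ∀ a b : A, op a (ld b a) = b)
    (hldcont : Continuous fun p : A × A => ld p.1 p.2)
    (rd : A → A → A) (hrd : ∀ a b : A, op (rd b a) a = b)
    (hrdcont : Continuous fun p : A × A => rd p.1 p.2)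
    (binv : A → A) (hbinv : ∀ a x : A, op (binv a) (op a x) = x)
    (binv' : A → A) (hbinv' : ∀ a x : A, op (op x a) (binv' a) = x)
    (happrox : ∀ (C : Set A), IsCompact C →
      ∀ (𝒰 : Set (Set A)), 𝒰.Finite → (∀ U ∈ 𝒰, IsOpen U) → C ⊆ ⋃₀ 𝒰 →
      ∃ (H : Type) (_ : Fintype H) (hop : H → H → H) (j : H → A),
        (∀ a : H, Function.Bijective (hop a)) ∧
        (∀ a : H, Function.Bijective (fun x => hop x a)) ∧
        Function.Injective j ∧
        (∀ U ∈ 𝒰, (C ∩ U).Nonempty → ∃ h : H, j h ∈ U) ∧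
        (∀ x y : H, j x ∈ C → j y ∈ C → op (j x) (j y) ∈ C →
          ∃ U ∈ 𝒰, j (hop x y) ∈ U ∧ op (j x) (j y) ∈ U)) :
    ∃ I : (A → ℝ) → ℝ,
      (∀ f g : A → ℝ, Continuous f → HasCompactSupport f →
        Continuous g → HasCompactSupport g → I (f + g) = I f + I g) ∧
      (∀ (c : ℝ) (f : A → ℝ), Continuous f → HasCompactSupport f →
        I (c • f) = c * I f) ∧
      (∀ f : A → ℝ, Continuous f → HasCompactSupport f → (∀ x, 0 ≤ f x) →
        0 ≤ I f) ∧
      (∀ f : A → ℝ, Continuous f → HasCompactSupport f → (∀ x, 0 ≤ f x) →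
        (∃ x, 0 < f x) → 0 < I f) ∧
      (∀ S : Set A, IsCompact S → ∃ Cs : ℝ,
        ∀ f : A → ℝ, Continuous f → HasCompactSupport f → tsupport f ⊆ S →
          |I f| ≤ Cs * ⨆ x, |f x|) ∧
      (∀ f : A → ℝ, Continuous f → HasCompactSupport f → (∀ x, 0 ≤ f x) →
        ∀ h : A, I (fun a => f (op h a)) ≤ I f ∧ I (fun a => f (op a h)) ≤ I f) := by
  classical
  rcases isEmpty_or_nonempty A with hA | hA
  · -- trivial case: A empty
    refine ⟨fun _ => 0, by simp, by simp, by simp, ?_, ?_, by simp⟩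
    · rintro f - - - ⟨x, -⟩; exact (hA.false x).elim
    · refine fun S _ => ⟨0, fun f _ _ _ => ?_⟩
      simp [Real.iSup_of_isEmpty]
  -- Main case
  obtain ⟨a₀⟩ := hA
  -- a fixed pair of nested compact neighbourhoods of a₀
  obtain ⟨K₁, hK₁, hK₁n⟩ := exists_compact_mem_nhds a₀
  obtain ⟨K₀, hK₀, hK₁₀⟩ := exists_compact_superset hK₁
  -- the filter of "fine" approximations
  let good : Set A → Set (Set A) → Set (QApx op) := fun C₀ 𝒱 =>
    {i | C₀ ⊆ i.C ∧ ∀ U ∈ i.U, (U ∩ i.C).Nonempty → ∃ V ∈ 𝒱, U ⊆ V}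
  let Idx := {q : Set A × Set (Set A) //
    IsCompact q.1 ∧ (∀ V ∈ q.2, IsOpen V) ∧ ∀ x : A, ∃ V ∈ q.2, x ∈ V}
  let F : Filter (QApx op) := ⨅ q : Idx, 𝓟 (good q.1.1 q.1.2)
  have hgood_ne : ∀ (C₀ : Set A) (𝒱 : Set (Set A)), IsCompact C₀ →
      (∀ V ∈ 𝒱, IsOpen V) → (∀ x : A, ∃ V ∈ 𝒱, x ∈ V) → (good C₀ 𝒱).Nonempty := by
    intro C₀ 𝒱 hC₀ h𝒱o h𝒱c
    have hcov : C₀ ⊆ ⋃ V : 𝒱, (V : Set A) := by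
      intro x _
      obtain ⟨V, hV, hxV⟩ := h𝒱c x
      exact mem_iUnion.2 ⟨⟨V, hV⟩, hxV⟩
    obtain ⟨t, ht⟩ := hC₀.elim_finite_subcover (fun V : 𝒱 => (V : Set A))
      (fun V => h𝒱o V V.2) hcov
    set 𝒰 : Set (Set A) := (fun V : 𝒱 => (V : Set A)) '' ↑t with h𝒰
    have h𝒰fin : 𝒰.Finite := t.finite_toSet.image _
    have h𝒰o : ∀ U ∈ 𝒰, IsOpen U := by
      rintro U ⟨V, -, rfl⟩; exact h𝒱o V V.2
    have h𝒰cov : C₀ ⊆ ⋃₀ 𝒰 := by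
      intro x hx
      obtain ⟨V, hVt, hxV⟩ := mem_iUnion₂.1 (ht hx)
      exact ⟨V, ⟨V, hVt, rfl⟩, hxV⟩
    obtain ⟨H, finH, hopH, jH, hbl, hbr, hinj, hdense, hhom⟩ :=
      happrox C₀ hC₀ 𝒰 h𝒰fin h𝒰o h𝒰cov
    refine ⟨⟨C₀, hC₀, 𝒰, h𝒰fin, h𝒰o, h𝒰cov, H, finH, hopH, hbl, hbr, jH, hinj,
      hdense, hhom⟩, subset_rfl, ?_⟩
    rintro U ⟨V, -, rfl⟩ -
    exact ⟨V, V.2, subset_rfl⟩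
  have hFne : F.NeBot := by
    have hne : Nonempty (QApx op) :=
      ⟨(hgood_ne ∅ {univ} isCompact_empty (by simp) (by simp)).some⟩
    refine iInf_neBot_of_directed ?_ ?_
    · rintro ⟨⟨C₁, 𝒱₁⟩, hc1, ho1, hv1⟩ ⟨⟨C₂, 𝒱₂⟩, hc2, ho2, hv2⟩
      refine ⟨⟨(C₁ ∪ C₂, image2 (· ∩ ·) 𝒱₁ 𝒱₂), hc1.union hc2, ?_, ?_⟩, ?_, ?_⟩
      · rintro V ⟨V₁, h1, V₂, h2, rfl⟩
        exact (ho1 V₁ h1).inter (ho2 V₂ h2)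
      · intro x
        obtain ⟨V₁, h1, hx1⟩ := hv1 x
        obtain ⟨V₂, h2, hx2⟩ := hv2 x
        exact ⟨V₁ ∩ V₂, mem_image2_of_mem h1 h2, hx1, hx2⟩
      · refine principal_mono.2 ?_
        rintro i ⟨hC, hU⟩
        refine ⟨subset_union_left.trans hC, ?_⟩
        intro U hU' hne'
        obtain ⟨V, hV, hsub⟩ := hU U hU' hne'
        obtain ⟨V₁, h1, V₂, h2, rfl⟩ := hV
        exact ⟨V₁, h1, hsub.trans inter_subset_left⟩
      · refine principal_mono.2 ?_
        rintro i ⟨hC, hU⟩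
        refine ⟨subset_union_right.trans hC, ?_⟩
        intro U hU' hne'
        obtain ⟨V, hV, hsub⟩ := hU U hU' hne'
        obtain ⟨V₁, h1, V₂, h2, rfl⟩ := hV
        exact ⟨V₂, h2, hsub.trans inter_subset_right⟩
    · rintro ⟨⟨C₀, 𝒱⟩, hc, ho, hv⟩
      exact principal_neBot_iff.2 (hgood_ne C₀ 𝒱 hc ho hv)
  have hFev : ∀ (C₀ : Set A) (𝒱 : Set (Set A)), IsCompact C₀ →
      (∀ V ∈ 𝒱, IsOpen V) → (∀ x : A, ∃ V ∈ 𝒱, x ∈ V) →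
      ∀ᶠ i in F, i ∈ good C₀ 𝒱 := by
    intro C₀ 𝒱 h1 h2 h3
    have : F ≤ 𝓟 (good C₀ 𝒱) := iInf_le (fun q : Idx => 𝓟 (good q.1.1 q.1.2)) ⟨(C₀, 𝒱), h1, h2, h3⟩
    exact this (mem_principal_self _)
  -- derived eventualities
  have hG1 : ∀ C₀ : Set A, IsCompact C₀ → ∀ᶠ i in F, C₀ ⊆ i.C := by
    intro C₀ h1
    filter_upwards [hFev C₀ {univ} h1 (by simp) (by simp)] with i hi using hi.1
  have hG2 : ∀ f : A → ℝ, Continuous f → ∀ ε : ℝ, 0 < ε →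
      ∀ᶠ i in F, ∀ U ∈ i.U, (U ∩ i.C).Nonempty →
        ∀ a ∈ U, ∀ b ∈ U, |f a - f b| ≤ ε := by
    intro f hf ε hε
    have key := hFev ∅ (range fun p : A => {x | |f x - f p| < ε / 2})
      isCompact_empty ?_ ?_
    · filter_upwards [key] with i hi U hU hne a ha b hb
      obtain ⟨V, hV, hUV⟩ := hi.2 U hU hne
      obtain ⟨p, rfl⟩ := hV
      have h1 : |f a - f p| < ε / 2 := hUV ha
      have h2 : |f b - f p| < ε / 2 := hUV hb
      calc |f a - f b| ≤ |f a - f p| + |f p - f b| := abs_sub_le _ _ _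
        _ = |f a - f p| + |f b - f p| := by rw [abs_sub_comm (f p)]
        _ ≤ ε := by linarith
    · rintro V ⟨p, rfl⟩
      exact isOpen_lt (by fun_prop) continuous_const
    · intro x
      exact ⟨_, ⟨x, rfl⟩, by simpa using half_pos hε⟩
  have hG3 : ∀ (p : A) (P : Set A), IsOpen P → p ∈ P →
      ∀ᶠ i in F, ∃ κ, i.j κ ∈ P ∧ i.j κ ∈ i.C := by
    intro p P hP hpP
    obtain ⟨Q, hQ, hpQ, hQP⟩ := exists_compact_subset hP hpP
    have key := hFev Q {interior Q, {p}ᶜ} hQ ?_ ?_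
    · filter_upwards [key] with i hi
      have hpC : p ∈ i.C := hi.1 (interior_subset hpQ)
      obtain ⟨U, hU, hpU⟩ := i.hUcov hpC
      obtain ⟨V, hV, hUV⟩ := hi.2 U hU ⟨p, hpU, hpC⟩
      have hVQ : U ⊆ interior Q := by
        simp only [Set.mem_insert_iff, Set.mem_singleton_iff] at hV
        rcases hV with rfl | rfl
        · exact hUV
        · exact absurd (hUV hpU) (by simp)
      obtain ⟨κ, hκ⟩ := i.dense U hU ⟨p, hpC, hpU⟩
      exact ⟨κ, hQP (interior_subset (hVQ hκ)), hi.1 (interior_subset (hVQ hκ))⟩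
    · rintro V hV
      simp only [Set.mem_insert_iff, Set.mem_singleton_iff] at hV
      rcases hV with rfl | rfl
      · exact isOpen_interior
      · exact isOpen_compl_singleton
    · intro x
      by_cases hx : x = p
      · exact ⟨interior Q, by simp, hx ▸ hpQ⟩
      · exact ⟨{p}ᶜ, by simp, hx⟩
  have hG4 : ∀ (K V : Set A), IsCompact K → IsOpen V → K ⊆ V →
      ∀ᶠ i in F, ∀ U ∈ i.U, (U ∩ i.C).Nonempty → (U ∩ K).Nonempty → U ⊆ V := by
    intro K V hK hV hKV
    have key := hFev ∅ {V, Kᶜ} isCompact_empty ?_ ?_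
    · filter_upwards [key] with i hi U hU hne hneK
      obtain ⟨W, hW, hUW⟩ := hi.2 U hU hne
      simp only [Set.mem_insert_iff, Set.mem_singleton_iff] at hW
      rcases hW with rfl | rfl
      · exact hUW
      · obtain ⟨y, hyU, hyK⟩ := hneK
        exact absurd (hUW hyU) (by simp [hyK])
    · rintro W hW
      simp only [Set.mem_insert_iff, Set.mem_singleton_iff] at hW
      rcases hW with rfl | rfl
      · exact hV
      · exact hK.isClosed.isOpen_compl
    · intro x
      by_cases hx : x ∈ K
      · exact ⟨V, by simp, hKV hx⟩
      · exact ⟨Kᶜ, by simp, hx⟩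
  -- counting
  let cnt : QApx op → Set A → ℕ := fun i S => (Finset.univ.filter (fun h => i.j h ∈ S)).card
  have hCNT : ∀ (S W₁ Q₁ W₂ Q₂ : Set A), IsCompact S → IsOpen W₁ → W₁.Nonempty →
      IsCompact Q₁ → IsOpen W₂ → IsCompact Q₂ → W₁ ⊆ Q₁ → Q₁ ⊆ W₂ → W₂ ⊆ Q₂ →
      ∃ m : ℕ, ∀ᶠ i in F, cnt i S ≤ m * cnt i Q₂ := by
    intro S W₁ Q₁ W₂ Q₂ hS hW₁o hW₁ne hQ₁ hW₂o hQ₂ hW₁Q₁ hQ₁W₂ hW₂Q₂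
    obtain ⟨ω, hω⟩ := hW₁ne
    have hopen : ∀ s : A, ∃ P W : Set A, IsOpen P ∧ IsOpen W ∧ rd ω s ∈ P ∧ s ∈ W ∧
        ∀ k ∈ P, ∀ x ∈ W, op k x ∈ W₁ := by
      intro s
      have hN : IsOpen {p : A × A | op p.1 p.2 ∈ W₁} := hW₁o.preimage hcont
      have hmem : (rd ω s, s) ∈ {p : A × A | op p.1 p.2 ∈ W₁} := by
        show op (rd ω s) s ∈ W₁
        rw [hrd s ω]; exact hω
      obtain ⟨P, W, hPo, hWo, hP, hW, hPW⟩ := isOpen_prod_iff.1 hN _ _ hmem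
      exact ⟨P, W, hPo, hWo, hP, hW, fun k hk x hx => hPW (mk_mem_prod hk hx)⟩
    choose P W hPo hWo hPk hsW hPW using hopen
    obtain ⟨t, ht⟩ := hS.elim_finite_subcover W hWo (fun x _ => mem_iUnion.2 ⟨x, hsW x⟩)
    refine ⟨t.card, ?_⟩
    filter_upwards [(Filter.eventually_all_finset t).2
        (fun s _ => hG3 (rd ω s) (P s) (hPo s) (hPk s)),
      hG1 (S ∪ Q₂) (hS.union hQ₂), hG4 Q₁ W₂ hQ₁ hW₂o hQ₁W₂] with i hκs hC hUW₂
    have hper : ∀ s ∈ t,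
        (Finset.univ.filter fun h : i.H => i.j h ∈ S ∧ i.j h ∈ W s).card ≤ cnt i Q₂ := by
      intro s hst
      obtain ⟨κ, hκP, hκC⟩ := hκs s hst
      refine Finset.card_le_card_of_injOn (i.hop κ) ?_ ((i.hl κ).injective.injOn)
      intro h hh
      simp only [Finset.mem_coe, Finset.mem_filter, Finset.mem_univ, true_and] at hh ⊢
      obtain ⟨hhS, hhW⟩ := hh
      have hCjh : i.j h ∈ i.C := hC (Set.mem_union_left _ hhS)
      have hopW₁ : op (i.j κ) (i.j h) ∈ W₁ := hPW s _ hκP _ hhW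
      have hopC : op (i.j κ) (i.j h) ∈ i.C :=
        hC (Set.mem_union_right _ (hW₂Q₂ (hQ₁W₂ (hW₁Q₁ hopW₁))))
      obtain ⟨U, hU, hjU, hopU⟩ := i.hom κ h hκC hCjh hopC
      have hUsub : U ⊆ W₂ := hUW₂ U hU ⟨_, hopU, hopC⟩ ⟨_, hopU, hW₁Q₁ hopW₁⟩
      exact hW₂Q₂ (hUsub hjU)
    have hsubset : (Finset.univ.filter fun h : i.H => i.j h ∈ S) ⊆
        t.biUnion (fun s => Finset.univ.filter fun h : i.H => i.j h ∈ S ∧ i.j h ∈ W s) := by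
      intro h hh
      simp only [Finset.mem_filter, Finset.mem_univ, true_and] at hh
      obtain ⟨s, hst, hsW'⟩ := mem_iUnion₂.1 (ht hh)
      exact Finset.mem_biUnion.2 ⟨s, hst,
        Finset.mem_filter.2 ⟨Finset.mem_univ _, hh, hsW'⟩⟩
    calc cnt i S ≤ (t.biUnion (fun s =>
          Finset.univ.filter fun h : i.H => i.j h ∈ S ∧ i.j h ∈ W s)).card :=
        Finset.card_le_card hsubset
      _ ≤ ∑ s ∈ t, (Finset.univ.filter fun h : i.H => i.j h ∈ S ∧ i.j h ∈ W s).card :=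
        Finset.card_biUnion_le
      _ ≤ ∑ _s ∈ t, cnt i Q₂ := Finset.sum_le_sum hper
      _ = t.card * cnt i Q₂ := by rw [Finset.sum_const, smul_eq_mul]
  have hBound : ∀ S : Set A, IsCompact S → ∃ m : ℕ, ∀ᶠ i in F, cnt i S ≤ m * cnt i K₀ := by
    intro S hS
    exact hCNT S (interior K₁) K₁ (interior K₀) K₀ hS isOpen_interior
      ⟨a₀, mem_interior_iff_mem_nhds.2 hK₁n⟩ hK₁ isOpen_interior hK₀
      interior_subset hK₁₀ interior_subset
  have hn1 : ∀ᶠ i in F, 1 ≤ cnt i K₀ := by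
    filter_upwards [hG3 a₀ (interior K₀) isOpen_interior
      (hK₁₀ (mem_of_mem_nhds hK₁n))] with i hi
    obtain ⟨κ, hκP, -⟩ := hi
    exact Finset.card_pos.2 ⟨κ, Finset.mem_filter.2 ⟨Finset.mem_univ _, interior_subset hκP⟩⟩
  -- the approximate integrals
  let φ : QApx op → (A → ℝ) → ℝ := fun i f => (∑ h, f (i.j h)) / (cnt i K₀ : ℝ)
  -- the defining ultrafilter
  obtain ⟨u, hu⟩ := F.exists_ultrafilter_le
  -- boundedness of the approximate integrals
  have hsup : ∀ f : A → ℝ, Continuous f → HasCompactSupport f →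
      ∀ x, |f x| ≤ ⨆ y, |f y| := by
    intro f hf hcs x
    have h1 : Continuous fun y => |f y| := hf.abs
    have h2 : HasCompactSupport fun y => |f y| := hcs.abs
    exact le_ciSup (h1.bddAbove_range_of_hasCompactSupport h2) x
  have hφb : ∀ (f : A → ℝ) (S : Set A), tsupport f ⊆ S → ∀ (B : ℝ), 0 ≤ B →
      (∀ x, |f x| ≤ B) → ∀ (m : ℕ) (i : QApx op), cnt i S ≤ m * cnt i K₀ →
      1 ≤ cnt i K₀ → |φ i f| ≤ m * B := by
    intro f S hfS B hB hfB m i hcnt hn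
    have hn' : (0 : ℝ) < (cnt i K₀ : ℝ) := by exact_mod_cast hn
    have hsum : |∑ h, f (i.j h)| ≤ (cnt i S : ℝ) * B := by
      calc |∑ h, f (i.j h)| ≤ ∑ h, |f (i.j h)| := Finset.abs_sum_le_sum_abs _ _
        _ ≤ ∑ h, (if i.j h ∈ S then B else 0) := by
          refine Finset.sum_le_sum fun h _ => ?_
          by_cases hh : i.j h ∈ S
          · simpa [hh] using hfB (i.j h)
          · have : f (i.j h) = 0 :=
              image_eq_zero_of_notMem_tsupport (fun hmem => hh (hfS hmem))
            simp [hh, this]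
        _ = (cnt i S : ℝ) * B := by
          rw [← Finset.sum_filter, Finset.sum_const, nsmul_eq_mul]
    have habs : |φ i f| = |∑ h, f (i.j h)| / (cnt i K₀ : ℝ) := by
      rw [abs_div, abs_of_pos hn']
    rw [habs, div_le_iff₀ hn']
    calc |∑ h, f (i.j h)| ≤ (cnt i S : ℝ) * B := hsum
      _ ≤ ((m * cnt i K₀ : ℕ) : ℝ) * B := by
        refine mul_le_mul_of_nonneg_right ?_ hB
        exact_mod_cast hcnt
      _ = ↑m * B * (cnt i K₀ : ℝ) := by push_cast; ring
  -- convergence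
  set I : (A → ℝ) → ℝ := fun f => limUnder ↑u (fun i => φ i f) with hI
  have hlim : ∀ f : A → ℝ, Continuous f → HasCompactSupport f →
      Tendsto (fun i => φ i f) ↑u (𝓝 (I f)) := by
    intro f hf hcs
    refine tendsto_nhds_limUnder ?_
    set B := ⨆ y, |f y| with hB
    have hfB := hsup f hf hcs
    have hB0 : 0 ≤ B := le_trans (abs_nonneg _) (hfB a₀)
    obtain ⟨m, hm⟩ := hBound (tsupport f) hcs
    have hev : ∀ᶠ i in ↑u, φ i f ∈ Icc (-(m * B)) (m * B) := by
      filter_upwards [Eventually.filter_mono hu (hm.and hn1)] with i hi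
      exact abs_le.1 (hφb f (tsupport f) subset_rfl B hB0 hfB m i hi.1 hi.2)
    obtain ⟨L, -, hL⟩ := isCompact_Icc.ultrafilter_le_nhds
      (u.map fun i => φ i f)
      (by rw [Ultrafilter.coe_map]; exact le_principal_iff.2 (mem_map.2 hev))
    rw [Ultrafilter.coe_map] at hL
    exact ⟨L, hL⟩
  -- the key subinvariance estimate, symmetric in the two sides
  have hsub : ∀ top : A → A → A, Continuous (fun p : A × A => top p.1 p.2) →
      ∀ tinv : A → A → A, (∀ h b, top h (tinv b h) = b) →
      Continuous (fun p : A × A => tinv p.1 p.2) →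
      (∀ h : A, Function.Injective (top h)) →
      ∀ bop : ∀ i : QApx op, i.H → i.H → i.H,
      (∀ i κ, Function.Bijective (bop i κ)) →
      (∀ (i : QApx op) x y, i.j x ∈ i.C → i.j y ∈ i.C → top (i.j x) (i.j y) ∈ i.C →
        ∃ V ∈ i.U, i.j (bop i x y) ∈ V ∧ top (i.j x) (i.j y) ∈ V) →
      ∀ f : A → ℝ, Continuous f → HasCompactSupport f → (∀ x, 0 ≤ f x) →
      ∀ h : A, ∀ ε : ℝ, 0 < ε →
      ∀ᶠ i in F, φ i (fun a => f (top h a)) ≤ φ i f + ε := by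
    intro top htopc tinv htinv htinvc htopinj bop hbopbij hbophom f hf hcs hf0 h ε hε
    set S := tsupport f with hSdef
    have hScpt : IsCompact S := hcs
    set T := {x | top h x ∈ S} with hTdef
    have hT : IsCompact T := by
      have heq : T = (fun s => tinv s h) '' S := by
        ext x
        constructor
        · intro hx
          refine ⟨top h x, hx, ?_⟩
          exact htopinj h (by rw [htinv])
        · rintro ⟨s, hs, rfl⟩
          show top h (tinv s h) ∈ S
          rw [htinv]; exact hs
      rw [heq]
      exact hScpt.image (htinvc.comp (continuous_id.prodMk continuous_const))
    obtain ⟨S₂, hS₂, hSS₂⟩ := exists_compact_superset hScpt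
    obtain ⟨mT, hmT⟩ := hBound T hT
    set ε' := ε / (2 * ((mT : ℝ) + 1)) with hε'def
    have hε'pos : 0 < ε' := by positivity
    -- tube lemma around {h} × T
    set N := {p : A × A |
      |f (top p.1 p.2) - f (top h p.2)| < ε' ∧ top p.1 p.2 ∈ interior S₂} with hNdef
    have hNopen : IsOpen N := by
      have hc1 : Continuous fun p : A × A => f (top p.1 p.2) := hf.comp htopc
      have hc2 : Continuous fun p : A × A => f (top h p.2) :=
        hf.comp (htopc.comp (continuous_const.prodMk continuous_snd))
      apply IsOpen.inter
      · exact isOpen_lt (hc1.sub hc2).abs continuous_const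
      · exact isOpen_interior.preimage htopc
    have hsubN : ({h} : Set A) ×ˢ T ⊆ N := by
      rintro ⟨k, x⟩ ⟨hk, hx⟩
      rw [mem_singleton_iff] at hk
      subst hk
      exact ⟨by simpa using hε'pos, hSS₂ hx⟩
    obtain ⟨V₁, V₂, hV₁o, hV₂o, hhV₁, hTV₂, hV₁V₂⟩ :=
      generalized_tube_lemma isCompact_singleton hT hNopen hsubN
    filter_upwards [hG3 h V₁ hV₁o (hhV₁ rfl), hG1 (T ∪ S₂) (hT.union hS₂),
      hG2 f hf ε' hε'pos, hmT, hn1] with i hκ hC hosc hmTi hni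
    obtain ⟨κ, hκV₁, hκC⟩ := hκ
    have hn' : (0 : ℝ) < (cnt i K₀ : ℝ) := by exact_mod_cast hni
    have key : ∀ x : i.H, f (top h (i.j x)) ≤
        f (i.j (bop i κ x)) + (if i.j x ∈ T then 2 * ε' else 0) := by
      intro x
      by_cases hx : i.j x ∈ T
      · have hmemN : (i.j κ, i.j x) ∈ N := hV₁V₂ (mk_mem_prod hκV₁ (hTV₂ hx))
        obtain ⟨h1, h2⟩ := hmemN
        have hjxC : i.j x ∈ i.C := hC (Set.mem_union_left _ hx)
        have hopC : top (i.j κ) (i.j x) ∈ i.C :=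
          hC (Set.mem_union_right _ (interior_subset h2))
        obtain ⟨U, hU, hjU, hopU⟩ := hbophom i κ x hκC hjxC hopC
        have hosc' : |f (i.j (bop i κ x)) - f (top (i.j κ) (i.j x))| ≤ ε' :=
          hosc U hU ⟨_, hopU, hopC⟩ _ hjU _ hopU
        rw [if_pos hx]
        have h1' := abs_lt.1 h1
        have h2' := abs_le.1 hosc'
        linarith [h1'.1, h1'.2, h2'.1, h2'.2]
      · have hz : f (top h (i.j x)) = 0 := image_eq_zero_of_notMem_tsupport hx
        rw [if_neg hx, hz, add_zero]
        exact hf0 _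
    have hsum : ∑ x, f (top h (i.j x)) ≤ (∑ y, f (i.j y)) + 2 * ε' * (cnt i T : ℝ) := by
      calc ∑ x, f (top h (i.j x))
          ≤ ∑ x, (f (i.j (bop i κ x)) + if i.j x ∈ T then 2 * ε' else 0) :=
            Finset.sum_le_sum (fun x _ => key x)
        _ = (∑ x, f (i.j (bop i κ x))) + ∑ x, (if i.j x ∈ T then 2 * ε' else 0) :=
            Finset.sum_add_distrib
        _ = (∑ y, f (i.j y)) + 2 * ε' * (cnt i T : ℝ) := by
            congr 1
            · exact Fintype.sum_bijective (bop i κ) (hbopbij i κ) _ _ (fun x => rfl)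
            · rw [← Finset.sum_filter, Finset.sum_const, nsmul_eq_mul]
              ring
    show (∑ x, f (top h (i.j x))) / (cnt i K₀ : ℝ) ≤ φ i f + ε
    have hstep : (∑ x, f (top h (i.j x))) / (cnt i K₀ : ℝ) ≤
        ((∑ y, f (i.j y)) + 2 * ε' * (cnt i T : ℝ)) / (cnt i K₀ : ℝ) := by
      gcongr
    refine hstep.trans ?_
    rw [add_div]
    have herr : (2 * ε' * (cnt i T : ℝ)) / (cnt i K₀ : ℝ) ≤ ε := by
      rw [div_le_iff₀ hn']
      have hcast : (cnt i T : ℝ) ≤ (mT : ℝ) * (cnt i K₀ : ℝ) := by exact_mod_cast hmTi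
      have hεε' : 2 * ε' * ((mT : ℝ) + 1) = ε := by
        rw [hε'def]; field_simp
      nlinarith [hε'pos.le, hn', hcast, hεε']
    exact add_le_add le_rfl herr
  -- assembly
  refine ⟨I, ?_, ?_, ?_, ?_, ?_, ?_⟩
  · -- additivity
    intro f g hfc hfs hgc hgs
    have h1 := hlim f hfc hfs
    have h2 := hlim g hgc hgs
    have h3 := hlim (f + g) (hfc.add hgc) (hfs.add hgs)
    have heq : (fun i => φ i (f + g)) = fun i => φ i f + φ i g := by
      funext i
      show (∑ h, (f + g) (i.j h)) / ((cnt i K₀ : ℝ)) = _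
      simp only [Pi.add_apply]
      rw [Finset.sum_add_distrib, add_div]
    rw [heq] at h3
    exact tendsto_nhds_unique h3 (h1.add h2)
  · -- scalar multiplication
    intro c f hfc hfs
    have h1 := hlim f hfc hfs
    have h3 := hlim (c • f) (hfc.const_smul c) (by exact hfs.smul_left)
    have heq : (fun i => φ i (c • f)) = fun i => c * φ i f := by
      funext i
      show (∑ h, (c • f) (i.j h)) / ((cnt i K₀ : ℝ)) = _
      simp only [Pi.smul_apply, smul_eq_mul]
      rw [← Finset.mul_sum, mul_div_assoc]
    rw [heq] at h3
    exact tendsto_nhds_unique h3 (h1.const_mul c)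
  · -- positivity
    intro f hfc hfs hf0
    refine ge_of_tendsto (hlim f hfc hfs) (Eventually.of_forall fun i => ?_)
    exact div_nonneg (Finset.sum_nonneg fun h _ => hf0 _) (Nat.cast_nonneg _)
  · -- strict positivity
    rintro f hfc hfs hf0 ⟨x₀, hx₀⟩
    set O := {x | f x₀ / 2 < f x} with hOdef
    have hOopen : IsOpen O := isOpen_lt continuous_const hfc
    have hx₀O : x₀ ∈ O := by
      show f x₀ / 2 < f x₀
      linarith
    obtain ⟨K', hK', hx₀K', hK'O⟩ := exists_compact_subset hOopen hx₀O
    obtain ⟨L, hL, hK'L, hLO⟩ := exists_compact_between hK' hOopen hK'O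
    obtain ⟨m, hm⟩ := hCNT K₀ (interior K') K' (interior L) L hK₀ isOpen_interior
      ⟨x₀, hx₀K'⟩ hK' isOpen_interior hL interior_subset hK'L interior_subset
    have hc0 : (0 : ℝ) < (f x₀ / 2) / ((m : ℝ) + 1) := by positivity
    refine lt_of_lt_of_le hc0 (ge_of_tendsto (hlim f hfc hfs) ?_)
    filter_upwards [Eventually.filter_mono hu (hm.and hn1)] with i hi
    obtain ⟨hmi, hni⟩ := hi
    have hn' : (0 : ℝ) < (cnt i K₀ : ℝ) := by exact_mod_cast hni
    have hsum : (cnt i L : ℝ) * (f x₀ / 2) ≤ ∑ h, f (i.j h) := by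
      calc (cnt i L : ℝ) * (f x₀ / 2)
          = ∑ _h ∈ Finset.univ.filter (fun h : i.H => i.j h ∈ L), (f x₀ / 2) := by
            rw [Finset.sum_const, nsmul_eq_mul]
        _ ≤ ∑ h ∈ Finset.univ.filter (fun h : i.H => i.j h ∈ L), f (i.j h) := by
            refine Finset.sum_le_sum fun h hh => ?_
            have : i.j h ∈ L := (Finset.mem_filter.1 hh).2
            exact le_of_lt (hLO this)
        _ ≤ ∑ h, f (i.j h) :=
            Finset.sum_le_sum_of_subset_of_nonneg (Finset.filter_subset _ _)
              (fun h _ _ => hf0 _)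
    have hsum0 : (0 : ℝ) ≤ ∑ h, f (i.j h) := Finset.sum_nonneg fun h _ => hf0 _
    show (f x₀ / 2) / ((m : ℝ) + 1) ≤ (∑ h, f (i.j h)) / (cnt i K₀ : ℝ)
    rw [div_le_div_iff₀ (by positivity) hn']
    have hcnt : (cnt i K₀ : ℝ) ≤ (m : ℝ) * (cnt i L : ℝ) := by exact_mod_cast hmi
    have hf2 : (0 : ℝ) ≤ f x₀ / 2 := by linarith
    have h1 : (f x₀ / 2) * (cnt i K₀ : ℝ) ≤ (f x₀ / 2) * ((m : ℝ) * (cnt i L : ℝ)) :=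
      mul_le_mul_of_nonneg_left hcnt hf2
    have h2 : (m : ℝ) * ((cnt i L : ℝ) * (f x₀ / 2)) ≤ (m : ℝ) * ∑ h, f (i.j h) :=
      mul_le_mul_of_nonneg_left hsum (Nat.cast_nonneg m)
    nlinarith [h1, h2, hsum0]
  · -- boundedness
    intro S hS
    obtain ⟨m, hm⟩ := hBound S hS
    refine ⟨m, fun f hfc hfs hsupp => ?_⟩
    have hfB := hsup f hfc hfs
    have hB0 : 0 ≤ ⨆ y, |f y| := le_trans (abs_nonneg _) (hfB a₀)
    have htd : Tendsto (fun i => |φ i f|) ↑u (𝓝 |I f|) := (hlim f hfc hfs).abs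
    refine le_of_tendsto htd ?_
    filter_upwards [Eventually.filter_mono hu (hm.and hn1)] with i hi
    exact hφb f S hsupp _ hB0 hfB m i hi.1 hi.2
  · -- subinvariance
    intro f hfc hfs hf0 h
    constructor
    · -- left translation
      have hcc : Continuous fun a : A => op h a :=
        hcont.comp (continuous_const.prodMk continuous_id)
      have hcf' : Continuous fun a => f (op h a) := hfc.comp hcc
      have hcs' : HasCompactSupport fun a => f (op h a) := by
        have hKc : IsCompact ((fun s => ld s h) '' tsupport f) :=
          IsCompact.image hfs (hldcont.comp (continuous_id.prodMk continuous_const))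
        refine HasCompactSupport.intro hKc (fun x hx => ?_)
        refine image_eq_zero_of_notMem_tsupport (fun hmem => hx ?_)
        exact ⟨op h x, hmem, (hlq h).injective (by rw [hld])⟩
      have hkey := hsub op hcont ld hld hldcont (fun h' => (hlq h').injective)
        (fun i => i.hop) (fun i κ => i.hl κ) (fun i x y hx hy hxy => i.hom x y hx hy hxy)
        f hfc hfs hf0 h
      have hle : ∀ ε : ℝ, 0 < ε → I (fun a => f (op h a)) ≤ I f + ε := by
        intro ε hε
        have hev := Eventually.filter_mono hu (hkey ε hε)
        have htd : Tendsto (fun i => φ i (fun a => f (op h a)) - φ i f) ↑u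
            (𝓝 (I (fun a => f (op h a)) - I f)) :=
          (hlim _ hcf' hcs').sub (hlim f hfc hfs)
        have hfin := le_of_tendsto htd (hev.mono fun i hi => by linarith)
        linarith
      exact le_of_forall_pos_le_add hle
    · -- right translation
      have hcc : Continuous fun a : A => op a h :=
        hcont.comp (continuous_id.prodMk continuous_const)
      have hcf' : Continuous fun a => f (op a h) := hfc.comp hcc
      have hcs' : HasCompactSupport fun a => f (op a h) := by
        have hKc : IsCompact ((fun s => rd s h) '' tsupport f) :=
          IsCompact.image hfs (hrdcont.comp (continuous_id.prodMk continuous_const))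
        refine HasCompactSupport.intro hKc (fun x hx => ?_)
        refine image_eq_zero_of_notMem_tsupport (fun hmem => hx ?_)
        exact ⟨op x h, hmem, (hrq h).injective (by simpa using hrd h (op x h))⟩
      have hkey := hsub (fun x y => op y x)
        (hcont.comp (continuous_snd.prodMk continuous_fst))
        rd hrd hrdcont (fun h' => (hrq h').injective)
        (fun i x y => i.hop y x) (fun i κ => i.hr κ)
        (fun i x y hx hy hxy => i.hom y x hy hx hxy)
        f hfc hfs hf0 h
      have hle : ∀ ε : ℝ, 0 < ε → I (fun a => f (op a h)) ≤ I f + ε := by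
        intro ε hε
        have hev := Eventually.filter_mono hu (hkey ε hε)
        have htd : Tendsto (fun i => φ i (fun a => f (op a h)) - φ i f) ↑u
            (𝓝 (I (fun a => f (op a h)) - I f)) :=
          (hlim _ hcf' hcs').sub (hlim f hfc hfs)
        have hfin := le_of_tendsto htd (hev.mono fun i hi => by linarith)
        linarith
      exact le_of_forall_pos_le_add hle
end

section
/- Let (Q,∘) be a quasigroup. For every finite subset S ⊆ Q there exist a finite quasigroup (H,⊙) and an injective map j : S → H such that for all s₁,s₂ ∈ S with s₁∘s₂ ∈ S one has j(s₁∘s₂) = j(s₁)⊙j(s₂). In particular this holds when Q is a group. -/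
/-!
Put `H' = S × (S → ZMod 2)` and `j s = (s, 0)`. For each `s ∈ S` extend the partial injection
`t ↦ s ∘ t` (defined where `s ∘ t ∈ S`) to a permutation `ρ s` of `S`, and let row `s` send
`(t, v)` to `(ρ s t, v + τ s t)`, where the tag `τ s t` (`outsideTag`) is `0` if `s ∘ t ∈ S`
and the indicator of `s` otherwise. Two rows agreeing in a column would have equal `ρ`-values
and equal tags, which right cancellation in `Q` rules out; so the rows `j S` form a latin
rectangle on `H'`. A latin rectangle completes to a latin square row by row: each new row is a
perfect matching, supplied by Hall's theorem, in the regular bipartite graph "symbol `y` is still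
missing from column `c`".
-/

open Finset Function Equiv

theorem Finset.exists_injective_forall_mem_of_regular {ι α : Type*} [Fintype ι] [DecidableEq α]
    (t : ι → Finset α) {d : ℕ} (hd : 0 < d) (ht : ∀ i, d ≤ #(t i))
    (hdeg : ∀ a, #{i | a ∈ t i} ≤ d) : ∃ f : ι → α, Injective f ∧ ∀ i, f i ∈ t i := by
  refine (all_card_le_biUnion_card_iff_exists_injective t).mp fun A => ?_
  refine Nat.le_of_mul_le_mul_right (card_mul_le_card_mul (fun i a => a ∈ t i)
    (fun i hi => ?_) (fun a _ => ?_)) hd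
  · rw [bipartiteAbove, filter_mem_eq_inter, inter_eq_right.mpr (subset_biUnion_of_mem t hi)]
    exact ht i
  · exact (card_le_card (filter_subset_filter _ (subset_univ A))).trans (hdeg a)

def IsLatinRectangle {α : Type*} (R : Finset α) (E : α → Perm α) : Prop :=
  ∀ c, Set.InjOn (fun r => E r c) R

namespace IsLatinRectangle

variable {α : Type*} [DecidableEq α] {R : Finset α} {E : α → Perm α}

theorem insert (hE : IsLatinRectangle R E) {r₀ : α} (hr₀ : r₀ ∉ R) {f : Perm α}
    (hf : ∀ r ∈ R, ∀ c, E r c ≠ f c) : IsLatinRectangle (insert r₀ R) (update E r₀ f) := by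
  intro c
  have hEq : Set.EqOn (fun r => E r c) (fun r => update E r₀ f r c) R := fun r hr => by
    simp only [update_of_ne (ne_of_mem_of_not_mem hr hr₀)]
  rw [coe_insert, Set.injOn_insert (mem_coe.not.mpr hr₀), ← hEq.image_eq]
  refine ⟨(hE c).congr hEq, ?_⟩
  rintro ⟨r, hr, h⟩
  exact hf r hr c (by simpa using h)

variable [Fintype α]

theorem exists_perm_forall_ne (hE : IsLatinRectangle R E) (hR : #R < Fintype.card α) :
    ∃ f : Perm α, ∀ r ∈ R, ∀ c, E r c ≠ f c := by
  have hcol : ∀ c, #(R.image fun r => E r c) = #R := fun c => card_image_of_injOn (hE c)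
  have hsym : ∀ a, #(R.image fun r => (E r).symm a) = #R := fun a =>
    card_image_of_injOn fun r hr r' hr' h => hE ((E r).symm a) hr hr' <| by
      beta_reduce; rw [apply_symm_apply, h, apply_symm_apply]
  obtain ⟨f, hf, hfmem⟩ := exists_injective_forall_mem_of_regular
    (fun c => (R.image fun r => E r c)ᶜ) (d := Fintype.card α - #R) (by omega)
    (fun c => by rw [card_compl, hcol])
    (fun a => by
      have hmissing : ({c | a ∈ (R.image fun r => E r c)ᶜ} : Finset α) =
          (R.image fun r => (E r).symm a)ᶜ := by
        ext c; simp [eq_symm_apply, eq_comm]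
      rw [hmissing, card_compl, hsym])
  refine ⟨ofBijective f (Finite.injective_iff_bijective.mp hf), fun r hr c h => ?_⟩
  exact mem_compl.mp (hfmem c) (mem_image.mpr ⟨r, hr, h⟩)

theorem exists_latinSquare (hE : IsLatinRectangle R E) :
    ∃ L : α → Perm α, IsLatinRectangle univ L ∧ ∀ r ∈ R, L r = E r := by
  induction hn : #Rᶜ generalizing R E with
  | zero =>
    obtain rfl : R = univ := (compl_eq_empty_iff R).mp (card_eq_zero.mp hn)
    exact ⟨E, hE, fun _ _ => rfl⟩
  | succ n ih =>
    obtain ⟨r₀, hr₀⟩ := card_pos.mp (show 0 < #Rᶜ by omega)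
    have hr₀R : r₀ ∉ R := mem_compl.mp hr₀
    obtain ⟨f, hf⟩ := hE.exists_perm_forall_ne (by rw [card_compl] at hn; omega)
    obtain ⟨L, hL, hLE⟩ := ih (hE.insert hr₀R hf)
      (by rw [compl_insert, card_erase_of_mem hr₀, hn]; rfl)
    refine ⟨L, hL, fun r hr => ?_⟩
    rw [hLE r (mem_insert_of_mem hr), update_of_ne (ne_of_mem_of_not_mem hr hr₀R)]

end IsLatinRectangle

theorem isLatinRectangle_prodShear {α F : Type*} [Fintype α] [DecidableEq α] [DecidableEq F]
    [AddGroup F]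
    (ρ : α → Perm α) (c : α → α → F) (hc : ∀ x, Injective fun s => (ρ s x, c s x)) :
    IsLatinRectangle (univ.image fun s => (s, 0))
      (fun r : α × F => (ρ r.1).prodShear fun x => Equiv.addRight (c r.1 x)) := by
  rintro ⟨x, i⟩ _ hr _ hr' h
  obtain ⟨s, -, rfl⟩ := mem_image.mp hr
  obtain ⟨s', -, rfl⟩ := mem_image.mp hr'
  simp only [prodShear_apply, coe_addRight, Prod.mk.injEq, add_right_inj] at h
  rw [hc x (Prod.ext h.1 h.2)]

theorem exists_fintype_quasigroup_of_isLatinRectangle_univ {α : Type*} [Fintype α]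
    {L : α → Perm α} (hL : IsLatinRectangle univ L) :
    ∃ (H : Type) (_ : Fintype H) (hop : H → H → H) (e : α ≃ H),
      (∀ a, Bijective (hop a)) ∧ (∀ a, Bijective fun x => hop x a) ∧
      ∀ a b, e (L a b) = hop (e a) (e b) := by
  let e := Fintype.equivFin α
  refine ⟨Fin (Fintype.card α), inferInstance, fun a b => e (L (e.symm a) (e.symm b)), e,
    fun a => ?_, fun b => ?_, fun a b => by simp⟩
  · exact e.bijective.comp ((L (e.symm a)).bijective.comp e.symm.bijective)
  · have hcol := hL (e.symm b)
    rw [coe_univ, Set.injOn_univ] at hcol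
    exact Finite.injective_iff_bijective.mp (e.injective.comp (hcol.comp e.symm.injective))

theorem Pi.single_left_injective {α M : Type*} [DecidableEq α] [Zero M] {m : M} (hm : m ≠ 0) :
    Injective fun a : α => Pi.single a m := fun a a' h => by
  simpa [Pi.single_apply, eq_comm, hm] using congrFun h a

section Quasigroup

variable {Q : Type*} (op : Q → Q → Q) (S : Finset Q)

theorem exists_perm_eq_mul_of_mem (hl : ∀ a, Injective (op a)) (s : S) :
    ∃ ρ : Perm S, ∀ t : S, ∀ h : op s t ∈ S, ρ t = ⟨op s t, h⟩ := by
  obtain ⟨ρ, hρ⟩ := Set.MapsTo.exists_equiv_extend_of_card_eq (Fintype.card_coe S)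
    (s := {t : S | op s t ∈ S}) (f := fun t => op s t) (fun t ht => ht)
    (fun t _ t' _ h => Subtype.ext (hl s h))
  exact ⟨ρ, fun t h => Subtype.ext (hρ t h)⟩

variable [DecidableEq Q]

def outsideTag (s t : S) : S → ZMod 2 := if op s t ∈ S then 0 else Pi.single s 1

theorem injective_perm_apply_outsideTag (hr : ∀ a, Injective fun x => op x a) {ρ : S → Perm S}
    (hρ : ∀ s t : S, ∀ h : op s t ∈ S, ρ s t = ⟨op s t, h⟩) (t : S) :
    Injective fun s => (ρ s t, outsideTag op S s t) := by
  intro s s' h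
  simp only [Prod.mk.injEq, outsideTag] at h
  obtain ⟨hρst, htag⟩ := h
  by_cases hs : op s t ∈ S <;> by_cases hs' : op s' t ∈ S <;>
    simp only [hs, hs', if_true, if_false] at htag
  · rw [hρ s t hs, hρ s' t hs'] at hρst
    exact Subtype.ext (hr t (congrArg Subtype.val hρst))
  · exact absurd htag.symm (Pi.single_ne_zero_iff.mpr one_ne_zero)
  · exact absurd htag (Pi.single_ne_zero_iff.mpr one_ne_zero)
  · exact Pi.single_left_injective one_ne_zero htag

end Quasigroup

/-- Any quasigroup (in particular any group) is approximable by finite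
quasigroups: every finite subset embeds into a finite quasigroup in a way
compatible with the partial multiplication. -/
theorem stmt_7 {Q : Type*} (op : Q → Q → Q)
    (hl : ∀ a : Q, Function.Bijective (op a))
    (hr : ∀ a : Q, Function.Bijective (fun x => op x a))
    (S : Finset Q) :
    ∃ (H : Type) (_ : Fintype H) (hop : H → H → H),
      (∀ a : H, Function.Bijective (hop a)) ∧
      (∀ a : H, Function.Bijective (fun x => hop x a)) ∧
      ∃ j : {x // x ∈ S} → H, Function.Injective j ∧
        ∀ (s₁ s₂ : {x // x ∈ S}) (h : op s₁.1 s₂.1 ∈ S),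
          j ⟨op s₁.1 s₂.1, h⟩ = hop (j s₁) (j s₂) := by
  classical
  choose ρ hρ using exists_perm_eq_mul_of_mem op S fun a => (hl a).1
  obtain ⟨L, hL, hLE⟩ := (isLatinRectangle_prodShear ρ (outsideTag op S)
    (injective_perm_apply_outsideTag op S (fun a => (hr a).1) hρ)).exists_latinSquare
  obtain ⟨H, _, hop, e, hrow, hcol, he⟩ := exists_fintype_quasigroup_of_isLatinRectangle_univ hL
  refine ⟨H, inferInstance, hop, hrow, hcol, fun s => e (s, 0),
    e.injective.comp (Prod.mk_left_injective 0), fun s t h => ?_⟩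
  rw [← he, hLE _ (mem_image_of_mem _ (mem_univ s))]
  simp [hρ s t h, outsideTag, h]
end

section
/- Let G be a locally compact Hausdorff topological group and K a class of finite algebras. Then G is approximable by algebras of K in the group sense (for every compact C ⊆ G and every neighborhood U of the identity there exist H ∈ K and an injective j : H → G with C ⊆ j(H)U and j(x⊙y) ∈ j(x)j(y)U whenever x,y ∈ H satisfy j(x), j(y), j(x)·j(y) ∈ C) if and only if G is approximable by algebras of K in the general topological-algebra sense (for every compact C ⊆ G and every finite cover 𝒰 of C by open sets there exist H ∈ K and an injective j : H → G such that every U ∈ 𝒰 meeting C contains some j(h), and for all x,y ∈ H with j(x), j(y), j(x)·j(y) ∈ C there is U ∈ 𝒰 containing both j(x⊙y) and j(x)·j(y)). -/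
open Pointwise Filter Topology Set

/-!
Both notions say that a finite partial copy of the algebra sits in `G` densely on `C` and almost
multiplicatively there; they differ only in how "close" is measured. A neighbourhood `V` of the
identity yields the cover `{c • V | c ∈ t}` of `C`, with `t ⊆ C` finite by compactness; two points
of one member differ by an element of `V⁻¹ * V`. Conversely, by a Lebesgue number argument for the
left uniformity of `G`, every finite open cover of the compact set `C` admits a neighbourhood `V`
of the identity such that each translate `c • V` with `c ∈ C` lies in a single member of the cover.
-/

section Approx

variable {G H : Type*} [Mul G]

def IsNhdsApprox (C U : Set G) (op : H → H → H) (j : H → G) : Prop :=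
  C ⊆ range j * U ∧
    ∀ x y : H, j x ∈ C → j y ∈ C → j x * j y ∈ C → j (op x y) ∈ (j x * j y) • U

def IsCoverApprox (C : Set G) (𝒰 : Set (Set G)) (op : H → H → H) (j : H → G) : Prop :=
  (∀ U ∈ 𝒰, (C ∩ U).Nonempty → ∃ h : H, j h ∈ U) ∧
    ∀ x y : H, j x ∈ C → j y ∈ C → j x * j y ∈ C → ∃ U ∈ 𝒰, j (op x y) ∈ U ∧ j x * j y ∈ U

end Approx

theorem inv_mul_mem_inv_mul_of_mem_smul_set {G : Type*} [Group G] {a b c : G} {V : Set G}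
    (ha : a ∈ c • V) (hb : b ∈ c • V) : a⁻¹ * b ∈ V⁻¹ * V := by
  obtain ⟨v, hv, rfl⟩ := ha
  obtain ⟨w, hw, rfl⟩ := hb
  exact ⟨v⁻¹, inv_mem_inv.2 hv, w, hw, by simp [smul_eq_mul, mul_assoc]⟩

section TopologicalGroup

variable {G : Type*} [Group G] [TopologicalSpace G] [IsTopologicalGroup G]

theorem exists_isOpen_one_mem_inv_mul_subset {U : Set G} (hU : U ∈ 𝓝 (1 : G)) :
    ∃ V : Set G, IsOpen V ∧ (1 : G) ∈ V ∧ V⁻¹ * V ⊆ U := by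
  obtain ⟨W, hW, -, hWinv, hWW⟩ := exists_closed_nhds_one_inv_eq_mul_subset hU
  refine ⟨interior W, isOpen_interior, mem_interior_iff_mem_nhds.2 hW, ?_⟩
  calc (interior W)⁻¹ * interior W ⊆ W⁻¹ * W :=
        mul_subset_mul (inv_subset_inv.2 interior_subset) interior_subset
    _ ⊆ U := by rwa [hWinv]

theorem IsCompact.exists_nhds_one_forall_smul_subset_of_sUnion {C : Set G} {𝒰 : Set (Set G)}
    (hC : IsCompact C) (hopen : ∀ U ∈ 𝒰, IsOpen U) (hcover : C ⊆ ⋃₀ 𝒰) :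
    ∃ V ∈ 𝓝 (1 : G), ∀ c ∈ C, ∃ U ∈ 𝒰, c • V ⊆ U := by
  let := IsTopologicalGroup.leftUniformSpace G
  obtain ⟨N, hN, hNC⟩ := lebesgue_number_lemma_sUnion hC hopen hcover
  obtain ⟨V, hV, hVN⟩ := mem_comap.1 hN
  refine ⟨V, hV, fun c hc => ?_⟩
  obtain ⟨U, hU, hball⟩ := hNC c hc
  refine ⟨U, hU, ?_⟩
  rintro _ ⟨v, hv, rfl⟩
  exact hball (hVN (by simpa [smul_eq_mul] using hv))

theorem exists_nhds_one_forall_inter_nonempty_of_subset_mul {C : Set G} {𝒰 : Set (Set G)}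
    (hfin : 𝒰.Finite) (hopen : ∀ U ∈ 𝒰, IsOpen U) :
    ∃ S ∈ 𝓝 (1 : G), ∀ A : Set G, C ⊆ A * S →
      ∀ U ∈ 𝒰, (C ∩ U).Nonempty → (A ∩ U).Nonempty := by
  have hpoint : ∀ U ∈ 𝒰, (C ∩ U).Nonempty → ∃ c ∈ C, {v : G | c * v⁻¹ ∈ U} ∈ 𝓝 1 :=
    fun U hU ⟨c, hcC, hcU⟩ =>
      ⟨c, hcC, ((hopen U hU).preimage (by fun_prop)).mem_nhds (by simpa using hcU)⟩
  choose! c hcC hc using hpoint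
  refine ⟨⋂ U ∈ {U ∈ 𝒰 | (C ∩ U).Nonempty}, {v | c U * v⁻¹ ∈ U},
    (biInter_mem (hfin.subset (sep_subset _ _))).2 fun U hU => hc U hU.1 hU.2, ?_⟩
  intro A hA U hU hCU
  obtain ⟨a, ha, v, hv, hav⟩ := hA (hcC U hU hCU)
  refine ⟨a, ha, ?_⟩
  have : c U * v⁻¹ ∈ U := mem_iInter₂.1 hv U ⟨hU, hCU⟩
  rwa [← hav, mul_inv_cancel_right] at this


theorem IsCompact.exists_nhds_one_isCoverApprox_of_isNhdsApprox {C : Set G} {𝒰 : Set (Set G)}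
    (hC : IsCompact C) (hfin : 𝒰.Finite) (hopen : ∀ U ∈ 𝒰, IsOpen U) (hcover : C ⊆ ⋃₀ 𝒰) :
    ∃ V ∈ 𝓝 (1 : G), ∀ {H : Type*} (op : H → H → H) (j : H → G),
      IsNhdsApprox C V op j → IsCoverApprox C 𝒰 op j := by
  obtain ⟨V, hV, hVsub⟩ := hC.exists_nhds_one_forall_smul_subset_of_sUnion hopen hcover
  obtain ⟨S, hS, hSmeet⟩ :=
    exists_nhds_one_forall_inter_nonempty_of_subset_mul (C := C) hfin hopen
  refine ⟨V ∩ S, inter_mem hV hS, fun op j ⟨hdense, hmul⟩ => ⟨?_, ?_⟩⟩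
  · intro U hU hCU
    obtain ⟨_, ⟨h, rfl⟩, hjh⟩ :=
      hSmeet (range j) (hdense.trans (mul_subset_mul_left inter_subset_right)) U hU hCU
    exact ⟨h, hjh⟩
  · intro x y hx hy hxy
    obtain ⟨U, hU, hVU⟩ := hVsub _ hxy
    refine ⟨U, hU, hVU (smul_set_mono inter_subset_left (hmul x y hx hy hxy)), hVU ?_⟩
    exact ⟨1, mem_of_mem_nhds hV, mul_one _⟩

theorem IsCompact.exists_cover_isNhdsApprox_of_isCoverApprox {C U : Set G} (hC : IsCompact C)
    (hU : U ∈ 𝓝 (1 : G)) :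
    ∃ 𝒰 : Set (Set G), 𝒰.Finite ∧ (∀ W ∈ 𝒰, IsOpen W) ∧ C ⊆ ⋃₀ 𝒰 ∧
      ∀ {H : Type*} (op : H → H → H) (j : H → G),
        IsCoverApprox C 𝒰 op j → IsNhdsApprox C U op j := by
  obtain ⟨V, hVo, hV1, hVU⟩ := exists_isOpen_one_mem_inv_mul_subset hU
  have hself : ∀ c : G, c ∈ c • V := fun c => ⟨1, hV1, mul_one c⟩
  obtain ⟨t, htC, htcov⟩ :=
    hC.elim_nhds_subcover (· • V) fun c _ => (hVo.smul c).mem_nhds (hself c)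
  refine ⟨(· • V) '' (t : Set G), t.finite_toSet.image _, ?_, ?_,
    fun op j ⟨hmeet, hmul⟩ => ⟨?_, ?_⟩⟩
  · rintro _ ⟨c, -, rfl⟩
    exact hVo.smul c
  · intro c hc
    obtain ⟨c₀, hc₀, hcc₀⟩ := mem_iUnion₂.1 (htcov hc)
    exact ⟨c₀ • V, mem_image_of_mem _ hc₀, hcc₀⟩
  · intro c hc
    obtain ⟨c₀, hc₀, hcc₀⟩ := mem_iUnion₂.1 (htcov hc)
    obtain ⟨h, hh⟩ := hmeet _ (mem_image_of_mem _ hc₀) ⟨c₀, htC c₀ hc₀, hself c₀⟩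
    exact ⟨j h, mem_range_self h, (j h)⁻¹ * c,
      hVU (inv_mul_mem_inv_mul_of_mem_smul_set hh hcc₀), mul_inv_cancel_left _ _⟩
  · intro x y hx hy hxy
    obtain ⟨_, ⟨c, -, rfl⟩, hop, hprod⟩ := hmul x y hx hy hxy
    exact mem_smul_set_iff_inv_smul_mem.2 (hVU (inv_mul_mem_inv_mul_of_mem_smul_set hprod hop))

end TopologicalGroup

theorem stmt_10_general {G : Type*} [Group G] [TopologicalSpace G] [IsTopologicalGroup G]
    (K : (H : Type) → (H → H → H) → Prop) :
    (∀ (C : Set G), IsCompact C → ∀ U ∈ nhds (1 : G),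
      ∃ (H : Type) (hop : H → H → H) (j : H → G),
        Finite H ∧ K H hop ∧ Function.Injective j ∧
        C ⊆ Set.range j * U ∧
        ∀ x y : H, j x ∈ C → j y ∈ C → j x * j y ∈ C →
          j (hop x y) ∈ (j x * j y) • U)
    ↔
    (∀ (C : Set G), IsCompact C →
      ∀ (𝒰 : Set (Set G)), 𝒰.Finite → (∀ U ∈ 𝒰, IsOpen U) → C ⊆ ⋃₀ 𝒰 →
      ∃ (H : Type) (hop : H → H → H) (j : H → G),
        Finite H ∧ K H hop ∧ Function.Injective j ∧
        (∀ U ∈ 𝒰, (C ∩ U).Nonempty → ∃ h : H, j h ∈ U) ∧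
        (∀ x y : H, j x ∈ C → j y ∈ C → j x * j y ∈ C →
          ∃ U ∈ 𝒰, j (hop x y) ∈ U ∧ j x * j y ∈ U)) := by
  constructor
  · intro happrox C hC 𝒰 hfin hopen hcover
    obtain ⟨V, hV, hcoverApprox⟩ :=
      hC.exists_nhds_one_isCoverApprox_of_isNhdsApprox hfin hopen hcover
    obtain ⟨H, op, j, hH, hK, hj, hVapprox⟩ := happrox C hC V hV
    exact ⟨H, op, j, hH, hK, hj, hcoverApprox op j hVapprox⟩
  · intro happrox C hC U hU
    obtain ⟨𝒰, hfin, hopen, hcover, hnhdsApprox⟩ :=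
      hC.exists_cover_isNhdsApprox_of_isCoverApprox hU
    obtain ⟨H, op, j, hH, hK, hj, h𝒰approx⟩ := happrox C hC 𝒰 hfin hopen hcover
    exact ⟨H, op, j, hH, hK, hj, hnhdsApprox op j h𝒰approx⟩

/-- For a locally compact group, approximability by algebras of a class `K`
in the group sense (compacts and neighborhoods of the identity) is equivalent
to approximability in the general topological-algebra sense (compacts and
finite open covers). -/
theorem stmt_10 {G : Type*} [Group G] [TopologicalSpace G] [IsTopologicalGroup G]
    [LocallyCompactSpace G] [T2Space G]
    (K : (H : Type) → (H → H → H) → Prop) :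
    (∀ (C : Set G), IsCompact C → ∀ U ∈ nhds (1 : G),
      ∃ (H : Type) (hop : H → H → H) (j : H → G),
        Finite H ∧ K H hop ∧ Function.Injective j ∧
        C ⊆ Set.range j * U ∧
        ∀ x y : H, j x ∈ C → j y ∈ C → j x * j y ∈ C →
          j (hop x y) ∈ (j x * j y) • U)
    ↔
    (∀ (C : Set G), IsCompact C →
      ∀ (𝒰 : Set (Set G)), 𝒰.Finite → (∀ U ∈ 𝒰, IsOpen U) → C ⊆ ⋃₀ 𝒰 →
      ∃ (H : Type) (hop : H → H → H) (j : H → G),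
        Finite H ∧ K H hop ∧ Function.Injective j ∧
        (∀ U ∈ 𝒰, (C ∩ U).Nonempty → ∃ h : H, j h ∈ U) ∧
        (∀ x y : H, j x ∈ C → j y ∈ C → j x * j y ∈ C →
          ∃ U ∈ 𝒰, j (hop x y) ∈ U ∧ j x * j y ∈ U)) :=
  stmt_10_general K
end

section
/- Let G be a locally compact Hausdorff topological group. For every neighborhood U of the identity and every compact set C ⊆ G there exist a finite set F ⊆ G and a family of subsets {A_{g,h} ⊆ F : g,h ∈ F} satisfying: (1) C ⊆ FU; (2) if g,h ∈ C ∩ F then A_{g,h} ⊆ ghU; (3) for every g ∈ F and every subset S ⊆ F, the cardinality of ⋃_{h∈S} A_{g,h} is at least the cardinality of S. -/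
/-!
Take a compact neighbourhood `K` of `1` with `K * K⁻¹ ⊆ U` and a finite set `F` of minimal
cardinality with `C ∪ C * C * K ⊆ F * K`; for `g, h ∈ C` let `A g h` consist of the cells `f • K`
that meet `(g * h) • K` (and `A g h = F` otherwise). If the cells meeting `(g * s) • K`, `s ∈ S`,
were fewer than `|S|`, then their `g⁻¹`-translates could replace the cells indexed by `S`,
since `g • (S * K) ⊆ C * C * K` is itself covered; this contradicts minimality.
-/

open Pointwise Topology

section MinCardCover

variable {G : Type*} [Group G]

def IsMinCardCover (D W : Set G) (F : Finset G) : Prop :=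
  D ⊆ F * W ∧ ∀ F' : Finset G, D ⊆ F' * W → F.card ≤ F'.card

theorem IsCompact.exists_finset_subset_mul [TopologicalSpace G] [ContinuousMul G]
    {D W : Set G} (hD : IsCompact D) (hW : W ∈ 𝓝 1) : ∃ F : Finset G, D ⊆ F * W := by
  obtain ⟨F, -, hF⟩ := hD.elim_nhds_subcover (fun x => x • W)
    fun x _ => by simpa using (smul_mem_nhds_smul_iff x).2 hW
  refine ⟨F, fun x hx => ?_⟩
  obtain ⟨f, hf, hxf⟩ := Set.mem_iUnion₂.1 (hF hx)
  obtain ⟨w, hw, rfl⟩ := Set.mem_smul_set.1 hxf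
  exact Set.mul_mem_mul hf hw

theorem IsCompact.exists_isMinCardCover [TopologicalSpace G] [ContinuousMul G]
    {D W : Set G} (hD : IsCompact D) (hW : W ∈ 𝓝 1) : ∃ F, IsMinCardCover D W F := by
  obtain ⟨F, hF, hmin⟩ := (measure Finset.card).wf.has_min {F : Finset G | D ⊆ F * W}
    (hD.exists_finset_subset_mul hW)
  exact ⟨F, hF, fun F' hF' => not_lt.1 (hmin F' hF')⟩

theorem IsMinCardCover.card_le_card_biUnion [DecidableEq G] {D W : Set G} {F S : Finset G}
    (hF : IsMinCardCover D W F) (hSF : S ⊆ F) {g : G} (hSD : ∀ s ∈ S, (g * s) • W ⊆ D)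
    (A : G → Finset G) (hA : ∀ s ∈ S, ∀ f ∈ F, (f • W ∩ (g * s) • W).Nonempty → f ∈ A s) :
    S.card ≤ (S.biUnion A).card := by
  by_contra! hlt
  set T := S.biUnion A
  have hcover : D ⊆ ↑(F \ S ∪ g⁻¹ • T) * W := by
    rintro _ hx
    obtain ⟨f, hf, w, hw, rfl⟩ := hF.1 hx
    by_cases hfS : f ∈ S
    · have hgfw : g * f * w ∈ (g * f) • W := Set.smul_mem_smul_set hw
      obtain ⟨f', hf', w', hw', hf'w'⟩ := hF.1 (hSD f hfS hgfw)
      have hf'T : f' ∈ T :=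
        Finset.mem_biUnion.2 ⟨f, hfS, hA f hfS f' hf' ⟨_, ⟨w', hw', hf'w'⟩, hgfw⟩⟩
      refine ⟨g⁻¹ * f', ?_, w', hw', ?_⟩
      · exact Finset.mem_union_right _ (Finset.smul_mem_smul_finset hf'T)
      · simp only at hf'w' ⊢
        rw [mul_assoc, hf'w']
        group
    · exact ⟨f, by simp [hf, hfS], w, hw, rfl⟩
  have hcard : (F \ S ∪ g⁻¹ • T).card ≤ F.card - S.card + T.card := by
    calc (F \ S ∪ g⁻¹ • T).card ≤ (F \ S).card + (g⁻¹ • T).card := Finset.card_union_le _ _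
      _ = F.card - S.card + T.card := by
        rw [Finset.card_sdiff_of_subset hSF, Finset.card_smul_finset]
  have := hF.2 _ hcover
  have := Finset.card_le_card hSF
  omega

theorem mem_smul_mul_inv_of_smul_inter_nonempty {W : Set G} {a f : G}
    (h : (f • W ∩ a • W).Nonempty) : f ∈ a • (W * W⁻¹) := by
  obtain ⟨_, ⟨w, hw, rfl⟩, w', hw', hw'w⟩ := h
  refine ⟨w' * w⁻¹, Set.mul_mem_mul hw' (Set.inv_mem_inv.2 hw), ?_⟩
  simp only [smul_eq_mul] at hw'w ⊢
  rw [← mul_assoc, hw'w]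
  group

theorem exists_isCompact_mem_nhds_one_mul_inv_subset [TopologicalSpace G] [IsTopologicalGroup G]
    [LocallyCompactSpace G] {U : Set G} (hU : U ∈ 𝓝 1) :
    ∃ K ∈ 𝓝 (1 : G), IsCompact K ∧ K * K⁻¹ ⊆ U := by
  obtain ⟨V, hV, -, hVinv, hVU⟩ := exists_closed_nhds_one_inv_eq_mul_subset hU
  obtain ⟨K, hK, hKV, hKc⟩ := local_compact_nhds hV
  refine ⟨K, hK, hKc, ?_⟩
  calc K * K⁻¹ ⊆ V * V⁻¹ := Set.mul_subset_mul hKV (Set.inv_subset_inv.2 hKV)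
    _ ⊆ U := by rwa [hVinv]

end MinCardCover

theorem stmt_11_general {G : Type*} [Group G] [TopologicalSpace G] [IsTopologicalGroup G]
    [LocallyCompactSpace G] [DecidableEq G]
    (U : Set G) (hU : U ∈ nhds (1 : G)) (C : Set G) (hC : IsCompact C) :
    ∃ (F : Finset G) (Afam : G → G → Finset G),
      (∀ g h : G, Afam g h ⊆ F) ∧
      C ⊆ ↑F * U ∧
      (∀ g h : G, g ∈ C → g ∈ F → h ∈ C → h ∈ F →
        (↑(Afam g h) : Set G) ⊆ (g * h) • U) ∧
      (∀ g ∈ F, ∀ S ⊆ F, S.card ≤ (S.biUnion fun h => Afam g h).card) := by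
  classical
  obtain ⟨K, hK, hKc, hKU⟩ := exists_isCompact_mem_nhds_one_mul_inv_subset hU
  obtain ⟨F, hF⟩ := (hC.union ((hC.mul hC).mul hKc)).exists_isMinCardCover hK
  let A (g h : G) : Finset G := F.filter fun f => g ∈ C → h ∈ C → (f • K ∩ (g * h) • K).Nonempty
  refine ⟨F, A, fun g h => Finset.filter_subset _ _, ?_, ?_, ?_⟩
  · have hKsubU : K ⊆ U := fun k hk => by
      simpa using hKU (Set.mul_mem_mul hk (Set.inv_mem_inv.2 (mem_of_mem_nhds hK)))
    exact fun x hx => Set.mul_subset_mul_left hKsubU (hF.1 (Or.inl hx))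
  · intro g h hg _ hh _ f hf
    exact Set.smul_set_mono hKU
      (mem_smul_mul_inv_of_smul_inter_nonempty ((Finset.mem_filter.1 hf).2 hg hh))
  · intro g _ S hSF
    by_cases hS : ∀ s ∈ S, g ∈ C ∧ s ∈ C
    · refine hF.card_le_card_biUnion hSF (fun s hs => ?_) _
        fun s _ f hf hmeet => Finset.mem_filter.2 ⟨hf, fun _ _ => hmeet⟩
      rintro _ ⟨k, hk, rfl⟩
      exact Or.inr (Set.mul_mem_mul (Set.mul_mem_mul (hS s hs).1 (hS s hs).2) hk)
    · push Not at hS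
      obtain ⟨s, hs, hgs⟩ := hS
      have hAF : A g s = F := Finset.filter_true_of_mem fun _ _ hg hs' => absurd hs' (hgs hg)
      calc S.card ≤ (A g s).card := hAF ▸ Finset.card_le_card hSF
        _ ≤ _ := Finset.card_le_card (Finset.subset_biUnion_of_mem (A g) hs)

/-- The key combinatorial lemma: for every neighborhood `U` of the identity
and every compact `C` in a locally compact group there are a finite set `F`
and a family `A_{g,h} ⊆ F` such that `F` is a `U`-grid of `C`, `A_{g,h} ⊆ ghU`
for `g, h ∈ C ∩ F`, and the Hall condition holds. -/
theorem stmt_11 {G : Type*} [Group G] [TopologicalSpace G] [IsTopologicalGroup G]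
    [LocallyCompactSpace G] [T2Space G] [DecidableEq G]
    (U : Set G) (hU : U ∈ nhds (1 : G)) (C : Set G) (hC : IsCompact C) :
    ∃ (F : Finset G) (Afam : G → G → Finset G),
      (∀ g h : G, Afam g h ⊆ F) ∧
      C ⊆ ↑F * U ∧
      (∀ g h : G, g ∈ C → g ∈ F → h ∈ C → h ∈ F →
        (↑(Afam g h) : Set G) ⊆ (g * h) • U) ∧
      (∀ g ∈ F, ∀ S ⊆ F, S.card ≤ (S.biUnion fun h => Afam g h).card) :=
  stmt_11_general U hU C hC
end

section
/- Let S be a finite semigroup with a zero element 0 (an element with 0·x = x·0 = 0 for all x ∈ S) which is 0-simple: every ideal I of S other than ∅ and S itself equals {0}. Let s ∈ S with s ≠ 0 and set F = sSs = {s·a·s : a ∈ S}. Then either x·y = 0 for all x,y ∈ F (F is a zero subsemigroup), or F∖{0} is a group under the multiplication of S: it is closed under multiplication, contains an element e with e·x = x·e = x for all x ∈ F∖{0}, and every x ∈ F∖{0} has y ∈ F∖{0} with x·y = y·x = e. -/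
/-!
If `s * s = 0` then `sSs` is a zero semigroup, so assume `s * s ≠ 0`. In a finite `0`-simple
semigroup every `t ≠ 0` generates `S` as a two-sided ideal, and finiteness upgrades
`s ∈ S (c s) S` to `s ∈ S (c s)`: the elements `x = w c` with `s ∈ x s S` form a subsemigroup,
whose idempotent `e` satisfies `e s = s`. Hence `c s ≠ 0` and `s d ≠ 0` give `s = w c s` and
`s = s d r`, so `(c s)(s d) = 0` would force `s s = 0`. Thus `sSs \ {0}` is a finite
subsemigroup; its idempotent fixes `s` on both sides, so it is an identity of `sSs`, and
`s = x r` for `x ∈ sSs \ {0}` yields right inverses, hence inverses.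
-/

open Set

section

variable {S : Type*}

section FiniteSemigroup

variable [Semigroup S] [Finite S]

theorem exists_isIdempotentElem_of_mul_mem {T : Set S} (hT : T.Nonempty)
    (hmul : ∀ x ∈ T, ∀ y ∈ T, x * y ∈ T) : ∃ e ∈ T, IsIdempotentElem e := by
  let _ : TopologicalSpace S := ⊥
  have : DiscreteTopology S := ⟨rfl⟩
  exact exists_idempotent_in_compact_subsemigroup (fun _ => continuous_of_discreteTopology) T hT
    T.toFinite.isCompact hmul

theorem exists_eq_mul_of_eq_mul_mul_left {s c u v : S} (h : s = u * (c * s) * v) :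
    ∃ w, s = w * (c * s) := by
  obtain ⟨_, ⟨⟨y, hy⟩, w, rfl⟩, he⟩ := exists_isIdempotentElem_of_mul_mem
    (T := {x | (∃ y, s = x * s * y) ∧ ∃ w, x = w * c})
    ⟨u * c, ⟨v, by simpa only [mul_assoc] using h⟩, u, rfl⟩
    (by
      rintro x ⟨⟨y, hy⟩, -⟩ _ ⟨⟨y', hy'⟩, w', rfl⟩
      refine ⟨⟨y' * y, ?_⟩, x * w', by simp only [mul_assoc]⟩
      calc s = x * s * y := hy
        _ = x * (w' * c * s * y') * y := by rw [← hy']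
        _ = x * (w' * c) * s * (y' * y) := by simp only [mul_assoc])
  refine ⟨w, ?_⟩
  calc s = w * c * s * y := hy
    _ = w * c * (w * c) * s * y := by rw [he.eq]
    _ = w * c * (w * c * s * y) := by simp only [mul_assoc]
    _ = w * c * s := by rw [← hy]
    _ = w * (c * s) := mul_assoc _ _ _

theorem exists_eq_mul_of_eq_mul_mul_right {s c u v : S} (h : s = u * (s * c) * v) :
    ∃ r, s = s * c * r := by
  have : Finite Sᵐᵒᵖ := .of_equiv S MulOpposite.opEquiv
  obtain ⟨w, hw⟩ := exists_eq_mul_of_eq_mul_mul_left (s := MulOpposite.op s)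
    (c := MulOpposite.op c) (u := MulOpposite.op v) (v := MulOpposite.op u)
    (by simpa only [← MulOpposite.op_mul, mul_assoc] using congrArg MulOpposite.op h)
  refine ⟨w.unop, MulOpposite.op_injective ?_⟩
  simpa only [MulOpposite.op_mul, MulOpposite.op_unop, mul_assoc] using hw

end FiniteSemigroup

def IsSemigroupIdeal [Mul S] (I : Set S) : Prop :=
  ∀ i ∈ I, ∀ t : S, t * i ∈ I ∧ i * t ∈ I

variable (S) in
def IsZeroSimple [Mul S] [Zero S] : Prop :=
  ∀ I : Set S, IsSemigroupIdeal I → I = ∅ ∨ I = univ ∨ I = {0}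

def sandwich [Mul S] (s : S) : Set S :=
  {x | ∃ a, x = s * a * s}

section Sandwich

variable [SemigroupWithZero S] {s x y : S}

theorem sandwich_mul_mem (hx : x ∈ sandwich s) (hy : y ∈ sandwich s) : x * y ∈ sandwich s := by
  obtain ⟨a, rfl⟩ := hx
  obtain ⟨b, rfl⟩ := hy
  exact ⟨a * s * s * b, by simp only [mul_assoc]⟩

theorem sandwich_mul_eq_zero_of_mul_self_eq_zero (hss : s * s = 0) (hx : x ∈ sandwich s)
    (hy : y ∈ sandwich s) : x * y = 0 := by
  obtain ⟨a, rfl⟩ := hx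
  obtain ⟨b, rfl⟩ := hy
  calc s * a * s * (s * b * s) = s * a * (s * s) * b * s := by simp only [mul_assoc]
    _ = 0 := by rw [hss, mul_zero, zero_mul, zero_mul]

end Sandwich

namespace IsZeroSimple

variable [SemigroupWithZero S] (hS : IsZeroSimple S)
include hS

theorem eq_univ_of_mem {I : Set S} (hI : IsSemigroupIdeal I) {a : S} (ha : a ∈ I)
    (ha0 : a ≠ 0) : I = univ := by
  rcases hS I hI with h | h | h
  · simp [h] at ha
  · exact h
  · exact absurd (by simpa [h] using ha) ha0

theorem exists_eq_mul (hS2 : ∃ x y : S, x * y ≠ 0) (r : S) : ∃ x y, r = x * y := by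
  obtain ⟨x, y, hxy⟩ := hS2
  have hI : IsSemigroupIdeal {w : S | ∃ x y, w = x * y} := by
    rintro _ ⟨x, y, rfl⟩ t
    exact ⟨⟨t * x, y, (mul_assoc _ _ _).symm⟩, ⟨x, y * t, mul_assoc _ _ _⟩⟩
  exact eq_univ_iff_forall.mp (hS.eq_univ_of_mem hI ⟨x, y, rfl⟩ hxy) r

theorem exists_mul_mul_ne_zero (hS2 : ∃ x y : S, x * y ≠ 0) {t : S} (ht : t ≠ 0) :
    ∃ u v, u * t * v ≠ 0 := by
  by_contra! htN
  have hI : IsSemigroupIdeal {t : S | ∀ u v, u * t * v = 0} := by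
    refine fun i hi t => ⟨fun u v => ?_, fun u v => ?_⟩
    · simpa only [mul_assoc] using hi (u * t) v
    · simpa only [mul_assoc] using hi u (t * v)
  obtain ⟨x, y, hxy⟩ := hS2
  obtain ⟨c, d, rfl⟩ := hS.exists_eq_mul ⟨_, _, hxy⟩ x
  exact hxy (eq_univ_iff_forall.mp (hS.eq_univ_of_mem hI htN ht) d c y)

theorem exists_eq_mul_mul (hS2 : ∃ x y : S, x * y ≠ 0) {t : S} (ht : t ≠ 0) (r : S) :
    ∃ u v, r = u * t * v := by
  have hI : IsSemigroupIdeal {w : S | ∃ u v, w = u * t * v} := by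
    rintro _ ⟨u, v, rfl⟩ r
    exact ⟨⟨r * u, v, by simp only [mul_assoc]⟩, ⟨u, v * r, by simp only [mul_assoc]⟩⟩
  obtain ⟨u, v, huv⟩ := hS.exists_mul_mul_ne_zero hS2 ht
  exact eq_univ_iff_forall.mp (hS.eq_univ_of_mem hI ⟨u, v, rfl⟩ huv) r

end IsZeroSimple

namespace IsZeroSimple

variable [SemigroupWithZero S] [Finite S] (hS : IsZeroSimple S) {s : S}
include hS

theorem exists_eq_mul_of_mul_ne_zero_left {c : S} (hcs : c * s ≠ 0) :
    ∃ w, s = w * (c * s) := by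
  obtain ⟨u, v, h⟩ := hS.exists_eq_mul_mul ⟨c, s, hcs⟩ hcs s
  exact exists_eq_mul_of_eq_mul_mul_left h

theorem exists_eq_mul_of_mul_ne_zero_right {d : S} (hsd : s * d ≠ 0) : ∃ r, s = s * d * r := by
  obtain ⟨u, v, h⟩ := hS.exists_eq_mul_mul ⟨s, d, hsd⟩ hsd s
  exact exists_eq_mul_of_eq_mul_mul_right h

theorem mul_mul_ne_zero (hss : s * s ≠ 0) {c d : S} (hcs : c * s ≠ 0) (hsd : s * d ≠ 0) :
    c * s * (s * d) ≠ 0 := by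
  obtain ⟨w, hw⟩ := hS.exists_eq_mul_of_mul_ne_zero_left hcs
  obtain ⟨r, hr⟩ := hS.exists_eq_mul_of_mul_ne_zero_right hsd
  intro h
  apply hss
  calc s * s = w * (c * s) * (s * d * r) := by rw [← hw, ← hr]
    _ = w * (c * s * (s * d)) * r := by simp only [mul_assoc]
    _ = 0 := by rw [h, mul_zero, zero_mul]

theorem sandwich_mul_ne_zero (hss : s * s ≠ 0) {x y : S} (hx : x ∈ sandwich s) (hx0 : x ≠ 0)
    (hy : y ∈ sandwich s) (hy0 : y ≠ 0) : x * y ≠ 0 := by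
  obtain ⟨a, rfl⟩ := hx
  obtain ⟨b, rfl⟩ := hy
  rw [mul_assoc s b] at hy0 ⊢
  exact hS.mul_mul_ne_zero hss hx0 hy0

theorem isIdempotentElem_mul_eq_self {e : S} (he : e ∈ sandwich s) (he0 : e ≠ 0)
    (hee : IsIdempotentElem e) : e * s = s ∧ s * e = s := by
  obtain ⟨a, rfl⟩ := he
  obtain ⟨w, hw⟩ := hS.exists_eq_mul_of_mul_ne_zero_left he0
  obtain ⟨r, hr⟩ := hS.exists_eq_mul_of_mul_ne_zero_right (d := a * s) (by rwa [← mul_assoc])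
  rw [← mul_assoc] at hr
  constructor
  · calc s * a * s * s = s * a * s * (s * a * s * r) := by rw [← hr]
      _ = s * a * s * r := by rw [← mul_assoc, hee.eq]
      _ = s := hr.symm
  · calc s * (s * a * s) = w * (s * a * s) * (s * a * s) := by rw [← hw]
      _ = w * (s * a * s) := by rw [mul_assoc, hee.eq]
      _ = s := hw.symm

theorem isIdempotentElem_mul_sandwich {e : S} (he : e ∈ sandwich s) (he0 : e ≠ 0)
    (hee : IsIdempotentElem e) {x : S} (hx : x ∈ sandwich s) : e * x = x ∧ x * e = x := by
  obtain ⟨hes, hse⟩ := hS.isIdempotentElem_mul_eq_self he he0 hee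
  obtain ⟨a, rfl⟩ := hx
  exact ⟨by rw [← mul_assoc, ← mul_assoc, hes], by rw [mul_assoc, hse]⟩

theorem exists_mul_eq_isIdempotentElem {e : S} (he : e ∈ sandwich s) (he0 : e ≠ 0)
    (hee : IsIdempotentElem e) {x : S} (hx : x ∈ sandwich s) (hx0 : x ≠ 0) :
    ∃ y ∈ sandwich s, x * y = e := by
  have hxe := (hS.isIdempotentElem_mul_sandwich he he0 hee hx).2
  obtain ⟨w, hw⟩ := he
  obtain ⟨a, rfl⟩ := hx
  obtain ⟨r, hr⟩ := hS.exists_eq_mul_of_mul_ne_zero_right (d := a * s) (by rwa [← mul_assoc])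
  rw [← mul_assoc] at hr
  refine ⟨e * (r * w * s), ⟨w * s * r * w, by rw [hw]; simp only [mul_assoc]⟩, ?_⟩
  calc s * a * s * (e * (r * w * s)) = s * a * s * e * r * w * s := by simp only [mul_assoc]
    _ = e := by rw [hxe, ← hr, hw]

theorem exists_inverse {e : S} (he : e ∈ sandwich s) (he0 : e ≠ 0)
    (hee : IsIdempotentElem e) {x : S} (hx : x ∈ sandwich s) (hx0 : x ≠ 0) :
    ∃ y ∈ sandwich s, y ≠ 0 ∧ x * y = e ∧ y * x = e := by
  obtain ⟨y, hy, hxy⟩ := hS.exists_mul_eq_isIdempotentElem he he0 hee hx hx0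
  have hy0 : y ≠ 0 := fun h => he0 (by rw [← hxy, h, mul_zero])
  obtain ⟨y', hy', hyy'⟩ := hS.exists_mul_eq_isIdempotentElem he he0 hee hy hy0
  refine ⟨y, hy, hy0, hxy, ?_⟩
  calc y * x = y * x * (y * y') := by
        rw [hyy', (hS.isIdempotentElem_mul_sandwich he he0 hee (sandwich_mul_mem hy hx)).2]
    _ = y * (x * y) * y' := by simp only [mul_assoc]
    _ = e := by rw [hxy, (hS.isIdempotentElem_mul_sandwich he he0 hee hy).2, hyy']

end IsZeroSimple

end

theorem stmt_15_general {S : Type*} [Fintype S] (mul : S → S → S)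
    (hassoc : ∀ x y z : S, mul (mul x y) z = mul x (mul y z))
    (z : S) (hz : ∀ x : S, mul z x = z ∧ mul x z = z)
    (hsimple : ∀ I : Set S, (∀ i ∈ I, ∀ t : S, mul t i ∈ I ∧ mul i t ∈ I) →
      I = ∅ ∨ I = Set.univ ∨ I = {z})
    (s : S) :
    (∀ x y : S, (∃ a, x = mul (mul s a) s) → (∃ b, y = mul (mul s b) s) →
      mul x y = z) ∨
    ((∀ x y : S, (∃ a, x = mul (mul s a) s) → x ≠ z →
        (∃ b, y = mul (mul s b) s) → y ≠ z →
        ((∃ c, mul x y = mul (mul s c) s) ∧ mul x y ≠ z)) ∧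
     ∃ e : S, (∃ a, e = mul (mul s a) s) ∧ e ≠ z ∧
       (∀ x : S, (∃ a, x = mul (mul s a) s) → x ≠ z →
         mul e x = x ∧ mul x e = x) ∧
       (∀ x : S, (∃ a, x = mul (mul s a) s) → x ≠ z →
         ∃ y : S, (∃ b, y = mul (mul s b) s) ∧ y ≠ z ∧
           mul x y = e ∧ mul y x = e)) := by
  let _ : SemigroupWithZero S :=
    { mul, mul_assoc := hassoc, zero := z, zero_mul := fun x => (hz x).1,
      mul_zero := fun x => (hz x).2 }
  have hS : IsZeroSimple S := hsimple
  by_cases hss : s * s = 0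
  · exact .inl fun x y hx hy => sandwich_mul_eq_zero_of_mul_self_eq_zero hss hx hy
  have hmul (x : S) (hx : x ∈ sandwich s) (hx0 : x ≠ 0) (y : S) (hy : y ∈ sandwich s)
      (hy0 : y ≠ 0) : x * y ∈ sandwich s ∧ x * y ≠ 0 :=
    ⟨sandwich_mul_mem hx hy, hS.sandwich_mul_ne_zero hss hx hx0 hy hy0⟩
  obtain ⟨e, ⟨he, he0⟩, hee⟩ := exists_isIdempotentElem_of_mul_mem
    (T := {x | x ∈ sandwich s ∧ x ≠ 0})
    ⟨s * s * (s * s), ⟨s * s, by simp only [mul_assoc]⟩, hS.mul_mul_ne_zero hss hss hss⟩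
    fun x hx y hy => hmul x hx.1 hx.2 y hy.1 hy.2
  exact .inr ⟨fun x y hx hx0 hy hy0 => hmul x hx hx0 y hy hy0, e, he, he0,
    fun x hx _ => hS.isIdempotentElem_mul_sandwich he he0 hee hx,
    fun x hx hx0 => hS.exists_inverse he he0 hee hx hx0⟩

/-- In a finite `0`-simple semigroup `S` with zero, for `0 ≠ s ∈ S` the set
`F = sSs` is either a zero subsemigroup or `F \ {0}` is a group. -/
theorem stmt_15 {S : Type*} [Fintype S] (mul : S → S → S)
    (hassoc : ∀ x y z : S, mul (mul x y) z = mul x (mul y z))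
    (z : S) (hz : ∀ x : S, mul z x = z ∧ mul x z = z)
    (hsimple : ∀ I : Set S, (∀ i ∈ I, ∀ t : S, mul t i ∈ I ∧ mul i t ∈ I) →
      I = ∅ ∨ I = Set.univ ∨ I = {z})
    (s : S) (hs : s ≠ z) :
    (∀ x y : S, (∃ a, x = mul (mul s a) s) → (∃ b, y = mul (mul s b) s) →
      mul x y = z) ∨
    ((∀ x y : S, (∃ a, x = mul (mul s a) s) → x ≠ z →
        (∃ b, y = mul (mul s b) s) → y ≠ z →
        ((∃ c, mul x y = mul (mul s c) s) ∧ mul x y ≠ z)) ∧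
     ∃ e : S, (∃ a, e = mul (mul s a) s) ∧ e ≠ z ∧
       (∀ x : S, (∃ a, x = mul (mul s a) s) → x ≠ z →
         mul e x = x ∧ mul x e = x) ∧
       (∀ x : S, (∃ a, x = mul (mul s a) s) → x ≠ z →
         ∃ y : S, (∃ b, y = mul (mul s b) s) ∧ y ≠ z ∧
           mul x y = e ∧ mul y x = e)) :=
  stmt_15_general mul hassoc z hz hsimple s
end

section
/- Let A be a Hausdorff topological space and let ℋ be the set of all pairs (C,𝒰) where C ⊆ A is compact and 𝒰 is a finite cover of C by open sets. Define (C,𝒰) ≤ (C',𝒰') iff C ⊇ C' and for every U ∈ 𝒰 with U ∩ C' ≠ ∅ there exists V ∈ 𝒰' with U ⊆ V. Then ℋ is downward directed under ≤: for any (C₁,𝒰₁), (C₂,𝒰₂) ∈ ℋ there exists (C,𝒰) ∈ ℋ with (C,𝒰) ≤ (C₁,𝒰₁) and (C,𝒰) ≤ (C₂,𝒰₂); indeed one may take C = C₁ ∪ C₂ and 𝒰 = {U∖C₁ : U ∈ 𝒰₂} ∪ {U∖C₂ : U ∈ 𝒰₁} ∪ {U ∩ V : U ∈ 𝒰₁,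 V ∈ 𝒰₂, U ∩ V ≠ ∅}. -/
open Set

section JointRefinement

variable {A : Type*} (C₁ C₂ : Set A) (𝒰₁ 𝒰₂ : Set (Set A))

/-- Away from `C₁` the sets of `𝒰₂` minus `C₁` suffice, away from `C₂` those of `𝒰₁` minus `C₂`,
and near `C₁ ∩ C₂` one uses the pairwise intersections. -/
def jointRefinement : Set (Set A) :=
  ((fun U => U \ C₁) '' 𝒰₂) ∪ ((fun U => U \ C₂) '' 𝒰₁) ∪
    {W | ∃ U ∈ 𝒰₁, ∃ V ∈ 𝒰₂, (U ∩ V).Nonempty ∧ W = U ∩ V}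

variable {C₁ C₂ 𝒰₁ 𝒰₂}

theorem jointRefinement_comm :
    jointRefinement C₂ C₁ 𝒰₂ 𝒰₁ = jointRefinement C₁ C₂ 𝒰₁ 𝒰₂ := by
  ext W
  simp only [jointRefinement, mem_union, mem_ofPred_eq]
  constructor
  · rintro ((h | h) | ⟨V, hV, U, hU, h⟩)
    exacts [Or.inl (Or.inr h), Or.inl (Or.inl h), Or.inr ⟨U, hU, V, hV, by rwa [inter_comm U]⟩]
  · rintro ((h | h) | ⟨U, hU, V, hV, h⟩)
    exacts [Or.inl (Or.inr h), Or.inl (Or.inl h), Or.inr ⟨V, hV, U, hU, by rwa [inter_comm V]⟩]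

theorem Set.Finite.jointRefinement (h₁ : 𝒰₁.Finite) (h₂ : 𝒰₂.Finite) :
    (jointRefinement C₁ C₂ 𝒰₁ 𝒰₂).Finite := by
  refine ((h₂.image _).union (h₁.image _)).union ((h₁.image2 (· ∩ ·) h₂).subset ?_)
  rintro W ⟨U, hU, V, hV, -, rfl⟩
  exact mem_image2_of_mem hU hV

theorem isOpen_of_mem_jointRefinement [TopologicalSpace A]
    (hC₁ : IsClosed C₁) (hC₂ : IsClosed C₂)
    (h₁ : ∀ U ∈ 𝒰₁, IsOpen U) (h₂ : ∀ V ∈ 𝒰₂, IsOpen V) :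
    ∀ W ∈ jointRefinement C₁ C₂ 𝒰₁ 𝒰₂, IsOpen W := by
  rintro W ((⟨V, hV, rfl⟩ | ⟨U, hU, rfl⟩) | ⟨U, hU, V, hV, -, rfl⟩)
  · exact (h₂ V hV).sdiff hC₁
  · exact (h₁ U hU).sdiff hC₂
  · exact (h₁ U hU).inter (h₂ V hV)

theorem subset_sUnion_jointRefinement_left (h₁ : C₁ ⊆ ⋃₀ 𝒰₁) (h₂ : C₂ ⊆ ⋃₀ 𝒰₂) :
    C₁ ⊆ ⋃₀ jointRefinement C₁ C₂ 𝒰₁ 𝒰₂ := by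
  intro x hx₁
  obtain ⟨U, hU, hxU⟩ := h₁ hx₁
  by_cases hx₂ : x ∈ C₂
  · obtain ⟨V, hV, hxV⟩ := h₂ hx₂
    exact ⟨U ∩ V, Or.inr ⟨U, hU, V, hV, ⟨x, hxU, hxV⟩, rfl⟩, hxU, hxV⟩
  · exact ⟨U \ C₂, Or.inl (Or.inr ⟨U, hU, rfl⟩), hxU, hx₂⟩

theorem union_subset_sUnion_jointRefinement (h₁ : C₁ ⊆ ⋃₀ 𝒰₁) (h₂ : C₂ ⊆ ⋃₀ 𝒰₂) :
    C₁ ∪ C₂ ⊆ ⋃₀ jointRefinement C₁ C₂ 𝒰₁ 𝒰₂ := by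
  refine union_subset (subset_sUnion_jointRefinement_left h₁ h₂) ?_
  rw [← jointRefinement_comm]
  exact subset_sUnion_jointRefinement_left h₂ h₁

theorem exists_superset_left_of_mem_jointRefinement {W : Set A}
    (hW : W ∈ jointRefinement C₁ C₂ 𝒰₁ 𝒰₂) (hWC₁ : (W ∩ C₁).Nonempty) :
    ∃ U ∈ 𝒰₁, W ⊆ U := by
  rcases hW with (⟨V, -, rfl⟩ | ⟨U, hU, rfl⟩) | ⟨U, hU, V, -, -, rfl⟩
  · obtain ⟨x, hxW, hxC₁⟩ := hWC₁
    exact absurd hxC₁ hxW.2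
  · exact ⟨U, hU, sdiff_subset⟩
  · exact ⟨U, hU, inter_subset_left⟩

theorem exists_superset_right_of_mem_jointRefinement {W : Set A}
    (hW : W ∈ jointRefinement C₁ C₂ 𝒰₁ 𝒰₂) (hWC₂ : (W ∩ C₂).Nonempty) :
    ∃ V ∈ 𝒰₂, W ⊆ V := by
  rw [← jointRefinement_comm] at hW
  exact exists_superset_left_of_mem_jointRefinement hW hWC₂

end JointRefinement

/-- The set of pairs `(C, 𝒰)` (compact set, finite open cover of it) is
downward directed under the preorder `(C,𝒰) ≤ (C',𝒰') ↔ C ⊇ C' ∧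
∀ U ∈ 𝒰, U ∩ C' ≠ ∅ → ∃ V ∈ 𝒰', U ⊆ V`; indeed an explicit lower bound of
`(C₁,𝒰₁)` and `(C₂,𝒰₂)` is given by `C = C₁ ∪ C₂` and
`𝒰 = {U \ C₁ : U ∈ 𝒰₂} ∪ {U \ C₂ : U ∈ 𝒰₁} ∪
{U ∩ V : U ∈ 𝒰₁, V ∈ 𝒰₂, U ∩ V ≠ ∅}`. -/
theorem stmt_16 {A : Type*} [TopologicalSpace A] [T2Space A]
    (C₁ C₂ : Set A) (𝒰₁ 𝒰₂ : Set (Set A))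
    (hC₁ : IsCompact C₁) (hC₂ : IsCompact C₂)
    (h𝒰₁fin : 𝒰₁.Finite) (h𝒰₂fin : 𝒰₂.Finite)
    (h𝒰₁open : ∀ U ∈ 𝒰₁, IsOpen U) (h𝒰₂open : ∀ U ∈ 𝒰₂, IsOpen U)
    (h𝒰₁cov : C₁ ⊆ ⋃₀ 𝒰₁) (h𝒰₂cov : C₂ ⊆ ⋃₀ 𝒰₂) :
    ∃ (C : Set A) (𝒰 : Set (Set A)),
      C = C₁ ∪ C₂ ∧
      𝒰 = ((fun U => U \ C₁) '' 𝒰₂) ∪ ((fun U => U \ C₂) '' 𝒰₁) ∪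
        {W | ∃ U ∈ 𝒰₁, ∃ V ∈ 𝒰₂, (U ∩ V).Nonempty ∧ W = U ∩ V} ∧
      IsCompact C ∧ 𝒰.Finite ∧ (∀ U ∈ 𝒰, IsOpen U) ∧ C ⊆ ⋃₀ 𝒰 ∧
      (C₁ ⊆ C ∧ ∀ U ∈ 𝒰, (U ∩ C₁).Nonempty → ∃ V ∈ 𝒰₁, U ⊆ V) ∧
      (C₂ ⊆ C ∧ ∀ U ∈ 𝒰, (U ∩ C₂).Nonempty → ∃ V ∈ 𝒰₂, U ⊆ V) := by
  refine ⟨C₁ ∪ C₂, jointRefinement C₁ C₂ 𝒰₁ 𝒰₂, rfl, rfl, hC₁.union hC₂,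
    h𝒰₁fin.jointRefinement h𝒰₂fin,
    isOpen_of_mem_jointRefinement hC₁.isClosed hC₂.isClosed h𝒰₁open h𝒰₂open,
    union_subset_sUnion_jointRefinement h𝒰₁cov h𝒰₂cov,
    ⟨subset_union_left, fun _ ↦ exists_superset_left_of_mem_jointRefinement⟩,
    ⟨subset_union_right, fun _ ↦ exists_superset_right_of_mem_jointRefinement⟩⟩
end
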